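/- arXiv:2605.06871 — 10 statements merged into one kernel-verified Lean document; each statement's English description precedes it below -/
import Mathlib

section
/- Under the same endpoint hypotheses, the quotient p0(y)/y extends Lipschitz-continuously to y = 0. Precisely: let b > 0, 0 < δ ≤ b, C0 > 0, K0 ≥ 0, and let p0 : ℝ → ℝ be continuous on [0,b] and differentiable on (0,b) with p0(0) = 0, such that C0⁻¹·y ≤ p0(y) ≤ C0·y for y ∈ (0,δ), the function y ↦ p0(y) + K0·y²/2 is convex on (0,δ), and p0 is concave on (0,δ). Let L := lim_{y→0⁺} p0'(y) (which exists by the previous result). Define h(y) := p0(y)/y for y ∈ (0,δ) and h(0) := L. Then h is Lipschitz on [0,δ) with Lipschitz constant K0/2, and h(0) > 0. -/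
open Set Filter
open scoped Topology

theorem stmt_1
    (b δ C0 K0 : ℝ) (p0 : ℝ → ℝ)
    (hb : 0 < b) (hδ : 0 < δ) (hδb : δ ≤ b)
    (hC0 : 0 < C0) (hK0 : 0 ≤ K0)
    (hcont : ContinuousOn p0 (Set.Icc 0 b))
    (hdiff : DifferentiableOn ℝ p0 (Set.Ioo 0 b))
    (hp00 : p0 0 = 0)
    (hlow : ∀ y ∈ Set.Ioo 0 δ, C0⁻¹ * y ≤ p0 y)
    (hup : ∀ y ∈ Set.Ioo 0 δ, p0 y ≤ C0 * y)
    (hconv : ConvexOn ℝ (Set.Ioo 0 δ) (fun y => p0 y + K0 * y ^ 2 / 2))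
    (hconc : ConcaveOn ℝ (Set.Ioo 0 δ) p0)
    (L : ℝ)
    (hL : Filter.Tendsto (deriv p0) (nhdsWithin 0 (Set.Ioi 0)) (nhds L)) :
    (∀ y ∈ Set.Ico 0 δ, ∀ y' ∈ Set.Ico 0 δ,
      |(if y = 0 then L else p0 y / y) - (if y' = 0 then L else p0 y' / y')|
        ≤ K0 / 2 * |y - y'|) ∧
    0 < L := by
  set q : ℝ → ℝ := fun y => p0 y + K0 * y ^ 2 / 2 with hqdef
  have hsubb : Set.Ioo (0:ℝ) δ ⊆ Set.Ioo 0 b := Set.Ioo_subset_Ioo le_rfl hδb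
  have hda : ∀ t ∈ Set.Ioo (0:ℝ) δ, HasDerivAt p0 (deriv p0 t) t := by
    intro t ht
    exact ((hdiff t (hsubb ht)).differentiableAt
      (isOpen_Ioo.mem_nhds (hsubb ht))).hasDerivAt
  have hdq : ∀ t ∈ Set.Ioo (0:ℝ) δ, HasDerivAt q (deriv p0 t + K0 * t) t := by
    intro t ht
    have h1 : HasDerivAt (fun y : ℝ => K0 * y ^ 2 / 2) (K0 * t) t := by
      have h := ((hasDerivAt_pow 2 t).const_mul K0).div_const 2
      convert h using 1 <;> [rfl; rfl; (push_cast; ring)]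
    exact (hda t ht).add h1
  -- p0, q tend to 0 at 0⁺
  have hmemIcc : Set.Icc (0:ℝ) b ∈ 𝓝[>] (0:ℝ) :=
    Filter.mem_of_superset (Ioo_mem_nhdsGT_of_mem ⟨le_rfl, hb⟩) Set.Ioo_subset_Icc_self
  have hp0t : Tendsto p0 (𝓝[>] (0:ℝ)) (𝓝 0) := by
    have h1 : ContinuousWithinAt p0 (Set.Icc 0 b) 0 := hcont 0 (Set.left_mem_Icc.2 hb.le)
    have h2 : ContinuousWithinAt p0 (Set.Ioi 0) 0 := h1.mono_of_mem_nhdsWithin hmemIcc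
    have h3 : Tendsto p0 (𝓝[>] (0:ℝ)) (𝓝 (p0 0)) := h2
    rwa [hp00] at h3
  have hqt : Tendsto q (𝓝[>] (0:ℝ)) (𝓝 0) := by
    have h2 : Tendsto (fun y : ℝ => K0 * y ^ 2 / 2) (𝓝[>] (0:ℝ)) (𝓝 0) := by
      have hc : Continuous fun y : ℝ => K0 * y ^ 2 / 2 := by continuity
      simpa using (hc.tendsto 0).mono_left nhdsWithin_le_nhds
    simpa using hp0t.add h2
  have hidt : Tendsto (fun t : ℝ => t) (𝓝[>] (0:ℝ)) (𝓝 0) :=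
    (continuous_id.tendsto 0).mono_left nhdsWithin_le_nhds
  have hdqt : Tendsto (fun t => deriv p0 t + K0 * t) (𝓝[>] (0:ℝ)) (𝓝 L) := by
    have h2 : Tendsto (fun t : ℝ => K0 * t) (𝓝[>] (0:ℝ)) (𝓝 0) := by
      simpa using (tendsto_const_nhds (α := ℝ)).mul hidt
    simpa using hL.add h2
  -- slope from t to fixed y, as t → 0⁺
  have slope_lim : ∀ (f : ℝ → ℝ) (l : ℝ), Tendsto f (𝓝[>] (0:ℝ)) (𝓝 l) → ∀ y : ℝ, 0 < y →
      Tendsto (fun t => slope f t y) (𝓝[>] (0:ℝ)) (𝓝 ((f y - l) / y)) := by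
    intro f l hf y hy
    have h1 : Tendsto (fun t => f y - f t) (𝓝[>] (0:ℝ)) (𝓝 (f y - l)) :=
      tendsto_const_nhds.sub hf
    have h2 : Tendsto (fun t : ℝ => y - t) (𝓝[>] (0:ℝ)) (𝓝 y) := by
      simpa using tendsto_const_nhds.sub hidt
    have h3 := h1.div h2 hy.ne'
    refine h3.congr fun t => ?_
    simp only [Pi.div_apply]
    rw [slope_comm, slope_def_field, ← neg_div_neg_eq, neg_sub, neg_sub]
  -- key pointwise bounds
  have key1 : ∀ y ∈ Set.Ioo (0:ℝ) δ, p0 y / y ≤ L := by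
    intro y hy
    have hsl : Tendsto (fun t => slope p0 t y) (𝓝[>] (0:ℝ)) (𝓝 (p0 y / y)) := by
      simpa using slope_lim p0 0 hp0t y hy.1
    have hev : ∀ᶠ t in 𝓝[>] (0:ℝ), slope p0 t y ≤ deriv p0 t := by
      filter_upwards [Ioo_mem_nhdsGT_of_mem (Set.mem_Ico.2 ⟨le_rfl, hy.1⟩)] with t ht
      exact hconc.slope_le_deriv ⟨ht.1, ht.2.trans hy.2⟩ hy ht.2
        ((hda t ⟨ht.1, ht.2.trans hy.2⟩).differentiableAt)
    exact le_of_tendsto_of_tendsto hsl hL hev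
  have key2 : ∀ y ∈ Set.Ioo (0:ℝ) δ, L ≤ p0 y / y + K0 * y / 2 := by
    intro y hy
    have hsl : Tendsto (fun t => slope q t y) (𝓝[>] (0:ℝ)) (𝓝 (q y / y)) := by
      simpa using slope_lim q 0 hqt y hy.1
    have hev : ∀ᶠ t in 𝓝[>] (0:ℝ), deriv p0 t + K0 * t ≤ slope q t y := by
      filter_upwards [Ioo_mem_nhdsGT_of_mem (Set.mem_Ico.2 ⟨le_rfl, hy.1⟩)] with t ht
      exact hconv.le_slope_of_hasDerivAt ⟨ht.1, ht.2.trans hy.2⟩ hy ht.2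
        (hdq t ⟨ht.1, ht.2.trans hy.2⟩)
    have h := le_of_tendsto_of_tendsto hdqt hsl hev
    have hy0 : y ≠ 0 := hy.1.ne'
    have hqy : q y / y = p0 y / y + K0 * y / 2 := by
      rw [hqdef]
      field_simp
    linarith [h, hqy.symm.le, hqy.le]
  have key3 : ∀ y ∈ Set.Ioo (0:ℝ) δ, ∀ y' ∈ Set.Ioo (0:ℝ) δ, y ≤ y' →
      p0 y' / y' ≤ p0 y / y := by
    intro y hy y' hy' hyy
    have hsl : Tendsto (fun t => slope p0 t y) (𝓝[>] (0:ℝ)) (𝓝 (p0 y / y)) := by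
      simpa using slope_lim p0 0 hp0t y hy.1
    have hsl' : Tendsto (fun t => slope p0 t y') (𝓝[>] (0:ℝ)) (𝓝 (p0 y' / y')) := by
      simpa using slope_lim p0 0 hp0t y' hy'.1
    have hev : ∀ᶠ t in 𝓝[>] (0:ℝ), slope p0 t y' ≤ slope p0 t y := by
      filter_upwards [Ioo_mem_nhdsGT_of_mem (Set.mem_Ico.2 ⟨le_rfl, hy.1⟩)] with t ht
      have htS : t ∈ Set.Ioo (0:ℝ) δ := ⟨ht.1, ht.2.trans hy.2⟩
      exact (hconc.slope_anti htS) ⟨hy, by simp [ht.2.ne']⟩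
        ⟨hy', by simp [(ht.2.trans_le hyy).ne']⟩ hyy
    exact le_of_tendsto_of_tendsto hsl' hsl hev
  have key4 : ∀ y ∈ Set.Ioo (0:ℝ) δ, ∀ y' ∈ Set.Ioo (0:ℝ) δ, y ≤ y' →
      p0 y / y + K0 * y / 2 ≤ p0 y' / y' + K0 * y' / 2 := by
    intro y hy y' hy' hyy
    have hsl : Tendsto (fun t => slope q t y) (𝓝[>] (0:ℝ)) (𝓝 (q y / y)) := by
      simpa using slope_lim q 0 hqt y hy.1
    have hsl' : Tendsto (fun t => slope q t y') (𝓝[>] (0:ℝ)) (𝓝 (q y' / y')) := by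
      simpa using slope_lim q 0 hqt y' hy'.1
    have hev : ∀ᶠ t in 𝓝[>] (0:ℝ), slope q t y ≤ slope q t y' := by
      filter_upwards [Ioo_mem_nhdsGT_of_mem (Set.mem_Ico.2 ⟨le_rfl, hy.1⟩)] with t ht
      have htS : t ∈ Set.Ioo (0:ℝ) δ := ⟨ht.1, ht.2.trans hy.2⟩
      exact (hconv.slope_mono htS) ⟨hy, by simp [ht.2.ne']⟩
        ⟨hy', by simp [(ht.2.trans_le hyy).ne']⟩ hyy
    have h := le_of_tendsto_of_tendsto hsl hsl' hev
    have hy0 : y ≠ 0 := hy.1.ne'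
    have hy0' : y' ≠ 0 := (hy.1.trans_le hyy).ne'
    have hqy : q y / y = p0 y / y + K0 * y / 2 := by
      rw [hqdef]; field_simp
    have hqy' : q y' / y' = p0 y' / y' + K0 * y' / 2 := by
      rw [hqdef]; field_simp
    linarith
  have hL0 : (0:ℝ) < L := by
    have hmid : δ / 2 ∈ Set.Ioo (0:ℝ) δ := ⟨by linarith, by linarith⟩
    have h1 := hlow _ hmid
    have h2 : C0⁻¹ ≤ p0 (δ / 2) / (δ / 2) := by
      rw [le_div_iff₀ (by linarith)]
      linarith
    have h3 := key1 _ hmid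
    have h4 : (0:ℝ) < C0⁻¹ := inv_pos.2 hC0
    linarith
  refine ⟨?_, hL0⟩
  have hmain : ∀ y ∈ Set.Ico (0:ℝ) δ, ∀ y' ∈ Set.Ico (0:ℝ) δ, y ≤ y' →
      0 ≤ (if y = 0 then L else p0 y / y) - (if y' = 0 then L else p0 y' / y') ∧
      (if y = 0 then L else p0 y / y) - (if y' = 0 then L else p0 y' / y')
        ≤ K0 / 2 * (y' - y) := by
    intro y hy y' hy' hle
    rcases eq_or_lt_of_le hy.1 with h0 | h0
    · -- y = 0
      rcases eq_or_lt_of_le hy'.1 with h0' | h0'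
      · simp [← h0, ← h0']
      · have hy'S : y' ∈ Set.Ioo (0:ℝ) δ := ⟨h0', hy'.2⟩
        have k1 := key1 y' hy'S
        have k2 := key2 y' hy'S
        rw [if_pos h0.symm, if_neg h0'.ne']
        constructor <;> [linarith; (rw [← h0] at *; linarith)]
    · -- 0 < y ≤ y'
      have hyS : y ∈ Set.Ioo (0:ℝ) δ := ⟨h0, hy.2⟩
      have hy'S : y' ∈ Set.Ioo (0:ℝ) δ := ⟨h0.trans_le hle, hy'.2⟩
      have k3 := key3 y hyS y' hy'S hle
      have k4 := key4 y hyS y' hy'S hle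
      rw [if_neg h0.ne', if_neg (h0.trans_le hle).ne']
      constructor <;> linarith
  intro y hy y' hy'
  rcases le_total y y' with h | h
  · obtain ⟨h1, h2⟩ := hmain y hy y' hy' h
    rw [abs_of_nonneg h1, abs_sub_comm, abs_of_nonneg (sub_nonneg.2 h)]
    exact h2
  · obtain ⟨h1, h2⟩ := hmain y' hy' y hy h
    rw [abs_sub_comm, abs_of_nonneg h1, abs_of_nonneg (sub_nonneg.2 h)]
    exact h2
end

section
/- Divergence form of the Z-equation: let θ > 0, c_θ := θ/(θ+1), and β(z) := (1/(θ+1))·z^{−1−1/(θ+1)} for z > 0. Let U ⊆ ℝ² be open, let γ : ℝ² → ℝ be three times continuously differentiable on U with ∂_y γ > 0 on U, let p0 : ℝ → ℝ be twice continuously differentiable, and set Z := (∂_y γ)^{−(θ+1)}. Assume that ∂_{tt} γ = p0'(y)·Z + c_θ·p0(y)·∂_y Z holds on U. Then on U: (a) β(Z)·∂_t Z = −∂_y ∂_t γ; and (b) ∂_t(β(Z)·∂_t Z) + ∂_y(p0'(y)·Z + c_θ·p0(y)·∂_y Z) = 0. -/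
open Set Filter Topology

/-- Partial derivative in the first coordinate (the `y` variable). -/
noncomputable def pdy (f : ℝ × ℝ → ℝ) (p : ℝ × ℝ) : ℝ :=
  deriv (fun y => f (y, p.2)) p.1

/-- Partial derivative in the second coordinate (the `t` variable). -/
noncomputable def pdt (f : ℝ × ℝ → ℝ) (p : ℝ × ℝ) : ℝ :=
  deriv (fun t => f (p.1, t)) p.2

/-- `Z := (∂_y γ)^{-(θ+1)}`. -/
noncomputable def Zf (θ : ℝ) (γ : ℝ × ℝ → ℝ) (p : ℝ × ℝ) : ℝ :=
  (pdy γ p) ^ (-(θ + 1))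

/-- `β(z) := (1/(θ+1)) z^{-1-1/(θ+1)}`. -/
noncomputable def βf (θ : ℝ) (z : ℝ) : ℝ :=
  (1 / (θ + 1)) * z ^ (-1 - 1 / (θ + 1))


lemma pdy_eq {f : ℝ × ℝ → ℝ} {p : ℝ × ℝ} {L : ℝ × ℝ →L[ℝ] ℝ}
    (hf : HasFDerivAt f L p) : pdy f p = L (1, 0) := by
  have hc : HasDerivAt (fun y : ℝ => ((y, p.2) : ℝ × ℝ)) ((1 : ℝ), (0 : ℝ)) p.1 :=
    (hasDerivAt_id p.1).prodMk (hasDerivAt_const p.1 p.2)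
  have hf' : HasFDerivAt f L (p.1, p.2) := by simpa using hf
  exact (hf'.comp_hasDerivAt p.1 hc).deriv

lemma pdt_eq {f : ℝ × ℝ → ℝ} {p : ℝ × ℝ} {L : ℝ × ℝ →L[ℝ] ℝ}
    (hf : HasFDerivAt f L p) : pdt f p = L (0, 1) := by
  have hc : HasDerivAt (fun t : ℝ => ((p.1, t) : ℝ × ℝ)) ((0 : ℝ), (1 : ℝ)) p.2 :=
    (hasDerivAt_const p.2 p.1).prodMk (hasDerivAt_id p.2)
  have hf' : HasFDerivAt f L (p.1, p.2) := by simpa using hf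
  exact (hf'.comp_hasDerivAt p.2 hc).deriv

lemma pdy_congr {f g : ℝ × ℝ → ℝ} {p : ℝ × ℝ} (h : ∀ᶠ q in 𝓝 p, f q = g q) :
    pdy f p = pdy g p := by
  apply Filter.EventuallyEq.deriv_eq
  have hc : Tendsto (fun y : ℝ => ((y, p.2) : ℝ × ℝ)) (𝓝 p.1) (𝓝 p) := by
    have : ContinuousAt (fun y : ℝ => ((y, p.2) : ℝ × ℝ)) p.1 := by fun_prop
    simpa using this.tendsto
  exact hc.eventually h

lemma pdt_congr {f g : ℝ × ℝ → ℝ} {p : ℝ × ℝ} (h : ∀ᶠ q in 𝓝 p, f q = g q) :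
    pdt f p = pdt g p := by
  apply Filter.EventuallyEq.deriv_eq
  have hc : Tendsto (fun t : ℝ => ((p.1, t) : ℝ × ℝ)) (𝓝 p.2) (𝓝 p) := by
    have : ContinuousAt (fun t : ℝ => ((p.1, t) : ℝ × ℝ)) p.2 := by fun_prop
    simpa using this.tendsto
  exact hc.eventually h

lemma hasFDerivAt_clm_apply' {f : ℝ × ℝ → (ℝ × ℝ →L[ℝ] ℝ)} {q : ℝ × ℝ}
    (hf : DifferentiableAt ℝ f q) (v : ℝ × ℝ) :
    HasFDerivAt (fun r => f r v)
      ((ContinuousLinearMap.apply ℝ ℝ v).comp (fderiv ℝ f q)) q :=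
  (ContinuousLinearMap.apply ℝ ℝ v).hasFDerivAt.comp q hf.hasFDerivAt


theorem stmt_4
    (θ : ℝ) (hθ : 0 < θ)
    (U : Set (ℝ × ℝ)) (hU : IsOpen U)
    (γ : ℝ × ℝ → ℝ) (hγ : ContDiffOn ℝ 3 γ U)
    (hpos : ∀ p ∈ U, 0 < pdy γ p)
    (p0 : ℝ → ℝ) (hp0 : ContDiff ℝ 2 p0)
    (heq : ∀ p ∈ U,
      pdt (pdt γ) p
        = deriv p0 p.1 * Zf θ γ p + (θ / (θ + 1)) * p0 p.1 * pdy (Zf θ γ) p) :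
    ∀ p ∈ U,
      (βf θ (Zf θ γ p) * pdt (Zf θ γ) p = -(pdy (pdt γ) p)) ∧
      (pdt (fun q => βf θ (Zf θ γ q) * pdt (Zf θ γ) q) p
        + pdy (fun q =>
            deriv p0 q.1 * Zf θ γ q + (θ / (θ + 1)) * p0 q.1 * pdy (Zf θ γ) q) p
        = 0) := by
  have hθ1 : (0:ℝ) < θ + 1 := by linarith
  have hθ1' : (θ:ℝ) + 1 ≠ 0 := ne_of_gt hθ1
  -- abbreviations as plain terms
  have hmem : ∀ q ∈ U, ContDiffAt ℝ 3 γ q := fun q hq => hγ.contDiffAt (hU.mem_nhds hq)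
  have hdγ : ∀ q ∈ U, DifferentiableAt ℝ γ q := fun q hq =>
    (hmem q hq).differentiableAt (by norm_num)
  have hD2 : ContDiffOn ℝ 2 (fderiv ℝ γ) U := hγ.fderiv_of_isOpen hU (by norm_num)
  have hF2 : ContDiffOn ℝ 2 (fun q => fderiv ℝ γ q (1, 0)) U := hD2.clm_apply contDiffOn_const
  have hG2 : ContDiffOn ℝ 2 (fun q => fderiv ℝ γ q (0, 1)) U := hD2.clm_apply contDiffOn_const
  have hdD : ∀ q ∈ U, DifferentiableAt ℝ (fderiv ℝ γ) q := fun q hq =>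
    (hD2.contDiffAt (hU.mem_nhds hq)).differentiableAt (by norm_num)
  have hdF : ∀ q ∈ U, DifferentiableAt ℝ (fun q => fderiv ℝ γ q (1, 0)) q := fun q hq =>
    (hF2.contDiffAt (hU.mem_nhds hq)).differentiableAt (by norm_num)
  have hdG : ∀ q ∈ U, DifferentiableAt ℝ (fun q => fderiv ℝ γ q (0, 1)) q := fun q hq =>
    (hG2.contDiffAt (hU.mem_nhds hq)).differentiableAt (by norm_num)
  have hpdyγ : ∀ q ∈ U, pdy γ q = fderiv ℝ γ q (1, 0) := fun q hq =>
    pdy_eq (hdγ q hq).hasFDerivAt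
  have hpdtγ : ∀ q ∈ U, pdt γ q = fderiv ℝ γ q (0, 1) := fun q hq =>
    pdt_eq (hdγ q hq).hasFDerivAt
  have hFpos : ∀ q ∈ U, 0 < fderiv ℝ γ q (1, 0) := fun q hq =>
    hpdyγ q hq ▸ hpos q hq
  have hZ : ∀ q ∈ U, Zf θ γ q = (fderiv ℝ γ q (1, 0)) ^ (-(θ + 1)) := fun q hq => by
    rw [Zf, hpdyγ q hq]
  -- symmetry of the second derivative of γ at points of U
  have hsymm : ∀ q ∈ U, ∀ v w, fderiv ℝ (fderiv ℝ γ) q v w = fderiv ℝ (fderiv ℝ γ) q w v :=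
    fun q hq => (hmem q hq).isSymmSndFDerivAt (by norm_num)
  -- fderiv of the slices F, G of the gradient
  have hfF : ∀ q ∈ U, ∀ v, fderiv ℝ (fun r => fderiv ℝ γ r (1, 0)) q v
      = fderiv ℝ (fderiv ℝ γ) q v (1, 0) := fun q hq v => by
    rw [(hasFDerivAt_clm_apply' (hdD q hq) (1, 0)).fderiv]; rfl
  have hfG : ∀ q ∈ U, ∀ v, fderiv ℝ (fun r => fderiv ℝ γ r (0, 1)) q v
      = fderiv ℝ (fderiv ℝ γ) q v (0, 1) := fun q hq v => by
    rw [(hasFDerivAt_clm_apply' (hdD q hq) (0, 1)).fderiv]; rfl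
  -- eventual equality of Zf with the rpow of F
  have hZev : ∀ q ∈ U, (Zf θ γ) =ᶠ[𝓝 q] (fun r => (fderiv ℝ γ r (1, 0)) ^ (-(θ + 1))) :=
    fun q hq => Filter.eventuallyEq_of_mem (hU.mem_nhds hq) (fun r hr => hZ r hr)
  have hZ'der : ∀ q ∈ U, HasFDerivAt (fun r => (fderiv ℝ γ r (1, 0)) ^ (-(θ + 1)))
      ((-(θ + 1) * (fderiv ℝ γ q (1, 0)) ^ (-(θ + 1) - 1)) •
        (fderiv ℝ (fun r => fderiv ℝ γ r (1, 0)) q)) q := fun q hq =>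
    (hdF q hq).hasFDerivAt.rpow_const (Or.inl (ne_of_gt (hFpos q hq)))
  have hpdtZ : ∀ q ∈ U, pdt (Zf θ γ) q
      = -(θ + 1) * (fderiv ℝ γ q (1, 0)) ^ (-(θ + 1) - 1)
        * fderiv ℝ (fderiv ℝ γ) q (1, 0) (0, 1) := by
    intro q hq
    rw [pdt_congr (hZev q hq), pdt_eq (hZ'der q hq)]
    rw [ContinuousLinearMap.smul_apply, smul_eq_mul, hfF q hq _, hsymm q hq _ _]
  have hpdtγev : ∀ q ∈ U, (pdt γ) =ᶠ[𝓝 q] (fun r => fderiv ℝ γ r (0, 1)) :=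
    fun q hq => Filter.eventuallyEq_of_mem (hU.mem_nhds hq) (fun r hr => hpdtγ r hr)
  have hpdypdtγ : ∀ q ∈ U, pdy (pdt γ) q
      = fderiv ℝ (fderiv ℝ γ) q (1, 0) (0, 1) := fun q hq => by
    rw [pdy_congr (hpdtγev q hq), pdy_eq (hdG q hq).hasFDerivAt, hfG q hq _]
  -- Part (a)
  have parta : ∀ q ∈ U, βf θ (Zf θ γ q) * pdt (Zf θ γ) q = -(pdy (pdt γ) q) := by
    intro q hq
    rw [hpdtZ q hq, hpdypdtγ q hq, hZ q hq, βf]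
    set a := fderiv ℝ γ q (1, 0) with ha
    have hap : (0:ℝ) < a := hFpos q hq
    have h1 : (a ^ (-(θ + 1))) ^ (-1 - 1/(θ+1)) = a ^ (θ + 2) := by
      rw [← Real.rpow_mul hap.le]
      congr 1
      field_simp
      ring
    have h2 : a ^ (θ + 2) * a ^ (-(θ + 1) - 1) = 1 := by
      rw [← Real.rpow_add hap, show θ + 2 + (-(θ + 1) - 1) = 0 by ring, Real.rpow_zero]
    rw [h1]
    set X := fderiv ℝ (fderiv ℝ γ) q (1, 0) (0, 1)
    have : 1 / (θ + 1) * a ^ (θ + 2) * (-(θ + 1) * a ^ (-(θ + 1) - 1) * X)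
        = (1 / (θ + 1) * -(θ + 1)) * (a ^ (θ + 2) * a ^ (-(θ + 1) - 1)) * X := by ring
    rw [this, h2]
    field_simp
  intro p hp
  refine ⟨parta p hp, ?_⟩
  -- Part (b)
  have hG1 : ContDiffOn ℝ 1 (fderiv ℝ (fun q => fderiv ℝ γ q (0, 1))) U :=
    hG2.fderiv_of_isOpen hU (by norm_num)
  have hdG1 : DifferentiableAt ℝ (fderiv ℝ (fun q => fderiv ℝ γ q (0, 1))) p :=
    (hG1.contDiffAt (hU.mem_nhds hp)).differentiableAt (by norm_num)
  -- term 1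
  have hev1 : (fun q => βf θ (Zf θ γ q) * pdt (Zf θ γ) q) =ᶠ[𝓝 p]
      (fun q => -(fderiv ℝ (fun r => fderiv ℝ γ r (0, 1)) q (1, 0))) :=
    Filter.eventuallyEq_of_mem (hU.mem_nhds hp) (fun q hq => by
      rw [parta q hq, hpdypdtγ q hq, hfG q hq _])
  have hHder : HasFDerivAt
      (fun q => -(fderiv ℝ (fun r => fderiv ℝ γ r (0, 1)) q (1, 0)))
      (-(((ContinuousLinearMap.apply ℝ ℝ ((1:ℝ), (0:ℝ))).comp
          (fderiv ℝ (fderiv ℝ (fun r => fderiv ℝ γ r (0, 1))) p)))) p :=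
    (hasFDerivAt_clm_apply' hdG1 (1, 0)).neg
  have hterm1 : pdt (fun q => βf θ (Zf θ γ q) * pdt (Zf θ γ) q) p
      = -(fderiv ℝ (fderiv ℝ (fun r => fderiv ℝ γ r (0, 1))) p (0, 1) (1, 0)) := by
    rw [pdt_congr hev1, pdt_eq hHder]; rfl
  -- term 2
  have hpdtpdtγ : ∀ q ∈ U, pdt (pdt γ) q
      = fderiv ℝ (fun r => fderiv ℝ γ r (0, 1)) q (0, 1) := fun q hq => by
    rw [pdt_congr (hpdtγev q hq), pdt_eq (hdG q hq).hasFDerivAt]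
  have hev2 : (fun q => deriv p0 q.1 * Zf θ γ q + (θ / (θ + 1)) * p0 q.1 * pdy (Zf θ γ) q)
      =ᶠ[𝓝 p] (fun q => fderiv ℝ (fun r => fderiv ℝ γ r (0, 1)) q (0, 1)) :=
    Filter.eventuallyEq_of_mem (hU.mem_nhds hp) (fun q hq => by
      rw [← heq q hq, hpdtpdtγ q hq])
  have hterm2 : pdy (fun q =>
        deriv p0 q.1 * Zf θ γ q + (θ / (θ + 1)) * p0 q.1 * pdy (Zf θ γ) q) p
      = fderiv ℝ (fderiv ℝ (fun r => fderiv ℝ γ r (0, 1))) p (1, 0) (0, 1) := by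
    rw [pdy_congr hev2, pdy_eq (hasFDerivAt_clm_apply' hdG1 (0, 1))]; rfl
  have hsymG : ∀ v w, fderiv ℝ (fderiv ℝ (fun r => fderiv ℝ γ r (0, 1))) p v w
      = fderiv ℝ (fderiv ℝ (fun r => fderiv ℝ γ r (0, 1))) p w v :=
    (hG2.contDiffAt (hU.mem_nhds hp)).isSymmSndFDerivAt (by norm_num)
  rw [hterm1, hterm2, hsymG]
  ring
end

section
/- Weighted divergence form (eq:Z-weighted-y): let θ > 0, c_θ := θ/(θ+1), and β(z) := (1/(θ+1))·z^{−1−1/(θ+1)} for z > 0. Let U ⊆ {(y,t) ∈ ℝ² : y > 0} be open, let p0 : ℝ → ℝ be twice continuously differentiable with p0(y) > 0 for every y in the y-projection of U, and let Z : ℝ² → ℝ be twice continuously differentiable on U with Z > 0 on U. If ∂_t(β(Z)·∂_t Z) + ∂_y(p0'·Z + c_θ·p0·∂_y Z) = 0 on U, then ∂_t(p0^{1/c_θ}·β(Z)·∂_t Z) + ∂_y(c_θ·p0^{1+1/c_θ}·∂_y Z) + p0^{1/c_θ}·p0''·Z = 0 on U. -/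
open Set

theorem stmt_5
    (θ : ℝ) (hθ : 0 < θ)
    (U : Set (ℝ × ℝ)) (hU : IsOpen U) (hUpos : U ⊆ {p : ℝ × ℝ | 0 < p.1})
    (p0 : ℝ → ℝ) (hp0 : ContDiff ℝ 2 p0) (hp0pos : ∀ p ∈ U, 0 < p0 p.1)
    (Z : ℝ × ℝ → ℝ) (hZ : ContDiffOn ℝ 2 Z U) (hZpos : ∀ p ∈ U, 0 < Z p)
    (heq : ∀ p ∈ U,
      pdt (fun q => βf θ (Z q) * pdt Z q) p
        + pdy (fun q =>
            deriv p0 q.1 * Z q + (θ / (θ + 1)) * p0 q.1 * pdy Z q) p = 0) :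
    ∀ p ∈ U,
      pdt (fun q => (p0 q.1) ^ (1 / (θ / (θ + 1))) * βf θ (Z q) * pdt Z q) p
        + pdy (fun q =>
            (θ / (θ + 1)) * (p0 q.1) ^ (1 + 1 / (θ / (θ + 1))) * pdy Z q) p
        + (p0 p.1) ^ (1 / (θ / (θ + 1))) * deriv (deriv p0) p.1 * Z p = 0 := by
  have hθ1 : (0:ℝ) < θ + 1 := by linarith
  set c : ℝ := θ / (θ + 1) with hcdef
  have hcpos : 0 < c := div_pos hθ hθ1
  have hcne : c ≠ 0 := ne_of_gt hcpos
  have hZ1 : ContDiffOn ℝ 1 Z U := hZ.of_le one_le_two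
  have hZdiff : ∀ q ∈ U, DifferentiableAt ℝ Z q := fun q hq =>
    ((hZ1.differentiableOn one_ne_zero).differentiableAt (hU.mem_nhds hq))
  set Zy : ℝ × ℝ → ℝ := fun q => fderiv ℝ Z q (1, 0) with hZydef
  have hfd : ContDiffOn ℝ 1 (fun q => fderiv ℝ Z q) U :=
    hZ.fderiv_of_isOpen hU (by norm_num)
  have hZyC1 : ContDiffOn ℝ 1 Zy U := hfd.clm_apply contDiffOn_const
  have hZydiff : ∀ q ∈ U, DifferentiableAt ℝ Zy q := fun q hq =>
    ((hZyC1.differentiableOn one_ne_zero).differentiableAt (hU.mem_nhds hq))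
  have hline : ∀ q : ℝ × ℝ, HasDerivAt (fun y : ℝ => (y, q.2)) ((1:ℝ), (0:ℝ)) q.1 :=
    fun q => (hasDerivAt_id q.1).prodMk (hasDerivAt_const q.1 q.2)
  have hZliney : ∀ q ∈ U, HasDerivAt (fun y => Z (y, q.2)) (Zy q) q.1 := by
    intro q hq
    exact ((hZdiff q hq).hasFDerivAt).comp_hasDerivAt q.1 (hline q)
  have hpdyZ : ∀ q ∈ U, pdy Z q = Zy q := fun q hq => (hZliney q hq).deriv
  have hp0d : Differentiable ℝ p0 := hp0.differentiable two_ne_zero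
  have hp0' : ContDiff ℝ 1 (deriv p0) := by
    have h2 : ContDiff ℝ ((1:ℕ) + 1) p0 := by exact_mod_cast hp0
    exact (contDiff_succ_iff_deriv.mp h2).2.2
  intro p hp
  obtain ⟨y0, t0⟩ := p
  dsimp only
  have hPp : 0 < p0 y0 := hp0pos _ hp
  have hyU : ∀ᶠ y in nhds y0, (y, t0) ∈ U :=
    (hU.preimage (continuous_id.prodMk continuous_const)).mem_nhds hp
  have hp0'd : DifferentiableAt ℝ (deriv p0) y0 :=
    (hp0'.differentiable one_ne_zero).differentiableAt
  set Dv : ℝ := deriv (fun y => Zy (y, t0)) y0 with hDv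
  have hGdiff : DifferentiableAt ℝ (fun y => Zy (y, t0)) y0 :=
    by have h := (hZydiff (y0, t0) hp).comp y0 ((differentiableAt_id (𝕜 := ℝ)).prodMk (differentiableAt_const t0)); exact h
  have hG : HasDerivAt (fun y => Zy (y, t0)) Dv y0 := hGdiff.hasDerivAt
  have hterm1 : pdt (fun q => p0 q.1 ^ (1 / c) * βf θ (Z q) * pdt Z q) (y0, t0)
      = p0 y0 ^ (1 / c) * pdt (fun q => βf θ (Z q) * pdt Z q) (y0, t0) := by
    simp only [pdt]
    simp only [mul_assoc]
    exact deriv_const_mul_field _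
  have hP' : HasDerivAt (fun y => p0 y ^ (1 + 1/c))
      (deriv p0 y0 * (1 + 1/c) * p0 y0 ^ (1 + 1/c - 1)) y0 :=
    (hp0d y0).hasDerivAt.rpow_const (Or.inl hPp.ne')
  have hterm2 : pdy (fun q => c * p0 q.1 ^ (1 + 1/c) * pdy Z q) (y0, t0)
      = c * (deriv p0 y0 * (1 + 1/c) * p0 y0 ^ (1 + 1/c - 1)) * Zy (y0, t0)
        + c * p0 y0 ^ (1 + 1/c) * Dv := by
    simp only [pdy]
    have hee : (fun y => c * p0 y ^ (1 + 1/c) * deriv (fun y' => Z (y', t0)) y)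
        =ᶠ[nhds y0] (fun y => c * p0 y ^ (1 + 1/c) * Zy (y, t0)) := by
      filter_upwards [hyU] with y hy
      exact congrArg (fun d => c * p0 y ^ (1 + 1/c) * d) ((hZliney (y, t0) hy).deriv)
    rw [hee.deriv_eq]
    exact ((hP'.const_mul c).mul hG).deriv
  have heqp := heq (y0, t0) hp
  have hrhs : pdy (fun q => deriv p0 q.1 * Z q + c * p0 q.1 * pdy Z q) (y0, t0)
      = (deriv (deriv p0) y0 * Z (y0, t0) + deriv p0 y0 * Zy (y0, t0))
        + (c * deriv p0 y0 * Zy (y0, t0) + c * p0 y0 * Dv) := by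
    simp only [pdy]
    have hee : (fun y => deriv p0 y * Z (y, t0) + c * p0 y * deriv (fun y' => Z (y', t0)) y)
        =ᶠ[nhds y0] (fun y => deriv p0 y * Z (y, t0) + c * p0 y * Zy (y, t0)) := by
      filter_upwards [hyU] with y hy
      exact congrArg (fun d => deriv p0 y * Z (y, t0) + c * p0 y * d) ((hZliney (y, t0) hy).deriv)
    rw [hee.deriv_eq]
    exact ((hp0'd.hasDerivAt.mul (hZliney _ hp)).add
      (((hp0d y0).hasDerivAt.const_mul c).mul hG)).deriv
  have hexp : (1 : ℝ) + 1/c - 1 = 1/c := by ring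
  have hsplit : p0 y0 ^ ((1:ℝ) + 1/c) = p0 y0 * p0 y0 ^ (1/c) := by
    rw [Real.rpow_add hPp, Real.rpow_one]
  have hc1 : c * (1 + 1/c) = c + 1 := by field_simp
  rw [hterm1, hterm2, hexp, hsplit]
  rw [hrhs] at heqp
  linear_combination (p0 y0 ^ (1/c)) * heqp
    + (p0 y0 ^ (1/c) * deriv p0 y0 * Zy (y0, t0)) * hc1
end

section
/- Volterra representation of bounded solutions of the regular-singular ODE (from the proof of Lemma 4.5, case k = 0): let ρ > 0, α ∈ (0,1), b0 > 0, and let b : [0,ρ] → ℝ be α-Hölder continuous with b(0) = b0. Define μ(y) := exp(∫₀^y (b(s) − b0)/s ds) for y ∈ [0,ρ] (the integral converges since |b(s) − b0| ≤ C·s^α). Let F : [0,ρ] → ℝ be continuous, and let V : (0,ρ] → ℝ be bounded and differentiable on (0,ρ], satisfying y·V'(y) + b(y)·V(y) = F(y) for every y ∈ (0,ρ]. Then for every y ∈ (0,ρ]: V(y) = y^{−b0}·μ(y)^{−1}·∫₀^y s^{b0−1}·μ(s)·F(s) ds. -/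
open Set MeasureTheory Filter

theorem stmt_8
    (ρ α b0 : ℝ) (hρ : 0 < ρ) (hα : α ∈ Set.Ioo (0:ℝ) 1) (hb0 : 0 < b0)
    (b : ℝ → ℝ) (hb0eq : b 0 = b0)
    (hb : ∃ C : ℝ, 0 ≤ C ∧ ∀ x ∈ Set.Icc 0 ρ, ∀ x' ∈ Set.Icc 0 ρ,
      |b x - b x'| ≤ C * |x - x'| ^ α)
    (F : ℝ → ℝ) (hF : ContinuousOn F (Set.Icc 0 ρ))
    (V : ℝ → ℝ) (M : ℝ) (hVbd : ∀ y ∈ Set.Ioc 0 ρ, |V y| ≤ M)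
    (hVdiff : DifferentiableOn ℝ V (Set.Ioc 0 ρ))
    (hODE : ∀ y ∈ Set.Ioc 0 ρ,
      y * derivWithin V (Set.Ioc 0 ρ) y + b y * V y = F y) :
    ∀ y ∈ Set.Ioc 0 ρ,
      V y = y ^ (-b0) * (Real.exp (∫ s in Set.Ioo 0 y, (b s - b0) / s))⁻¹
        * ∫ s in Set.Ioo 0 y,
            s ^ (b0 - 1) * Real.exp (∫ u in Set.Ioo 0 s, (b u - b0) / u) * F s := by
  obtain ⟨C, hC0, hC⟩ := hb
  have hα0 : (0:ℝ) < α := hα.1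
  -- continuity of b on Icc 0 ρ
  have hbcont : ContinuousOn b (Icc 0 ρ) := by
    intro x hx
    rw [ContinuousWithinAt, ← tendsto_sub_nhds_zero_iff]
    apply squeeze_zero_norm' (a := fun x' => C * |x' - x| ^ α)
    · filter_upwards [self_mem_nhdsWithin] with x' hx'
      simpa using hC x' hx' x hx
    · have hc : ContinuousAt (fun t : ℝ => C * |t - x| ^ α) x := by
        apply ContinuousAt.mul continuousAt_const
        have h1 : ContinuousAt (fun t : ℝ => |t - x|) x := by
          exact ((continuous_id.sub continuous_const).abs).continuousAt
        exact h1.rpow_const (Or.inr hα0.le)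
      have := hc.tendsto
      simp only [sub_self, abs_zero, Real.zero_rpow hα0.ne', mul_zero] at this
      exact this.mono_left nhdsWithin_le_nhds
  set h : ℝ → ℝ := fun s => (b s - b0) / s with hhdef
  have hhcont : ContinuousOn h (Ioc 0 ρ) := by
    apply ContinuousOn.div
    · exact (hbcont.mono Ioc_subset_Icc_self).sub continuousOn_const
    · exact continuousOn_id
    · intro x hx; exact hx.1.ne'
  have hhcont' : ContinuousOn h (Ioo 0 ρ) := hhcont.mono Ioo_subset_Ioc_self
  have hdomint : IntegrableOn (fun s => C * s ^ (α - 1)) (Ioc 0 ρ) := by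
    have h1 : IntervalIntegrable (fun s : ℝ => s ^ (α - 1)) volume 0 ρ :=
      intervalIntegral.intervalIntegrable_rpow' (by linarith)
    have h2 := h1.const_mul C
    exact (intervalIntegrable_iff_integrableOn_Ioc_of_le hρ.le).1 h2
  have hint : IntegrableOn h (Ioc 0 ρ) := by
    apply Integrable.mono' hdomint (hhcont.aestronglyMeasurable measurableSet_Ioc)
    filter_upwards [ae_restrict_mem measurableSet_Ioc] with s hs
    have hs0 : 0 < s := hs.1
    have hbound : |b s - b0| ≤ C * s ^ α := by
      have := hC s (Ioc_subset_Icc_self hs) 0 ⟨le_rfl, hρ.le⟩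
      simpa [hb0eq, abs_of_pos hs0] using this
    have : ‖h s‖ = |b s - b0| / s := by
      rw [hhdef]; simp only [Real.norm_eq_abs, abs_div, abs_of_pos hs0]
    rw [this]
    calc |b s - b0| / s ≤ C * s ^ α / s := by gcongr
      _ = C * s ^ (α - 1) := by
          rw [Real.rpow_sub hs0, Real.rpow_one]; ring
  have hintsub : ∀ y ∈ Icc 0 ρ, IntervalIntegrable h volume 0 y := fun y hy =>
    (intervalIntegrable_iff_integrableOn_Ioc_of_le hy.1).2
      (hint.mono_set (Ioc_subset_Ioc le_rfl hy.2))
  set J : ℝ → ℝ := fun y => ∫ s in (0:ℝ)..y, h s with hJdef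
  have hJeq : ∀ y : ℝ, 0 ≤ y → (∫ s in Ioo 0 y, h s) = J y := by
    intro y hy
    show (∫ s in Ioo 0 y, h s) = ∫ s in (0:ℝ)..y, h s
    rw [intervalIntegral.integral_of_le hy, integral_Ioc_eq_integral_Ioo]
  set B : ℝ := ∫ s in Ioc 0 ρ, |h s| with hBdef
  have hJbd : ∀ y ∈ Icc 0 ρ, |J y| ≤ B := by
    intro y hy
    show |∫ s in (0:ℝ)..y, h s| ≤ B
    rw [intervalIntegral.integral_of_le hy.1]
    calc |∫ s in Ioc 0 y, h s| ≤ ∫ s in Ioc 0 y, |h s| := by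
          simpa [Real.norm_eq_abs] using MeasureTheory.norm_integral_le_integral_norm (μ := volume.restrict (Ioc 0 y)) h
      _ ≤ B := by
          apply setIntegral_mono_set hint.abs
          · filter_upwards with s using abs_nonneg _
          · exact HasSubset.Subset.eventuallyLE (Ioc_subset_Ioc le_rfl hy.2)
  have hJcont : ContinuousOn J (Icc 0 ρ) := by
    have hIcc : IntegrableOn h (Icc 0 ρ) := by
      rwa [integrableOn_Icc_iff_integrableOn_Ioc]
    have := intervalIntegral.continuousOn_primitive (a := 0) (b := ρ) hIcc
    apply this.congr
    intro x hx
    show (∫ s in (0:ℝ)..x, h s) = ∫ t in Ioc 0 x, h t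
    rw [intervalIntegral.integral_of_le hx.1]
  have hJderiv : ∀ x ∈ Ioo 0 ρ, HasDerivAt J (h x) x := by
    intro x hx
    exact intervalIntegral.integral_hasDerivAt_right (hintsub x (Ioo_subset_Icc_self hx))
      (hhcont'.stronglyMeasurableAtFilter isOpen_Ioo x hx)
      (hhcont'.continuousAt (isOpen_Ioo.mem_nhds hx))
  have hVderiv : ∀ x ∈ Ioo 0 ρ, HasDerivAt V (derivWithin V (Ioc 0 ρ) x) x := by
    intro x hx
    have hmem : Ioc 0 ρ ∈ nhds x :=
      mem_nhds_iff.2 ⟨Ioo 0 ρ, Ioo_subset_Ioc_self, isOpen_Ioo, hx⟩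
    exact ((hVdiff x (Ioo_subset_Ioc_self hx)).hasDerivWithinAt).hasDerivAt hmem
  set G : ℝ → ℝ := fun y => y ^ b0 * Real.exp (J y) * V y with hGdef
  set g : ℝ → ℝ := fun s => s ^ (b0 - 1) * Real.exp (J s) * F s with hgdef
  have hGderiv : ∀ x ∈ Ioo 0 ρ, HasDerivAt G (g x) x := by
    intro x hx
    have hx0 : 0 < x := hx.1
    have h1 : HasDerivAt (fun y : ℝ => y ^ b0) (b0 * x ^ (b0 - 1)) x :=
      Real.hasDerivAt_rpow_const (Or.inl hx0.ne')
    have h2 : HasDerivAt (fun y => Real.exp (J y)) (Real.exp (J x) * h x) x :=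
      (hJderiv x hx).exp
    have h3 := hVderiv x hx
    have hD := (h1.mul h2).mul h3
    have hODEx := hODE x (Ioo_subset_Ioc_self hx)
    have hxpow : x ^ b0 = x ^ (b0 - 1) * x := by
      rw [← Real.rpow_add_one hx0.ne' (b0 - 1)]; ring_nf
    have heq : (b0 * x ^ (b0 - 1) * Real.exp (J x) + x ^ b0 * (Real.exp (J x) * h x)) * V x
        + x ^ b0 * Real.exp (J x) * derivWithin V (Ioc 0 ρ) x = g x := by
      have hxne : x ≠ 0 := hx0.ne'
      simp only [hgdef, hhdef, hxpow]
      have hcancel : x * ((b x - b0) / x) = b x - b0 := by field_simp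
      linear_combination (x ^ (b0 - 1) * Real.exp (J x)) * hODEx
        + (x ^ (b0 - 1) * Real.exp (J x) * V x) * hcancel
    exact heq ▸ hD
  have hGcont : ContinuousOn G (Ioc 0 ρ) := by
    apply ContinuousOn.mul
    apply ContinuousOn.mul
    · apply ContinuousOn.rpow_const continuousOn_id
      intro x hx; exact Or.inl hx.1.ne'
    · exact (hJcont.mono Ioc_subset_Icc_self).rexp
    · exact hVdiff.continuousOn
  -- bound for F
  obtain ⟨K, hK⟩ : ∃ K : ℝ, ∀ x ∈ Icc 0 ρ, ‖F x‖ ≤ K :=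
    isCompact_Icc.exists_bound_of_continuousOn hF
  have hK0 : 0 ≤ K := le_trans (norm_nonneg _) (hK 0 ⟨le_rfl, hρ.le⟩)
  -- integrability of g
  have hgcont : ContinuousOn g (Ioc 0 ρ) := by
    apply ContinuousOn.mul
    apply ContinuousOn.mul
    · apply ContinuousOn.rpow_const continuousOn_id
      intro x hx; exact Or.inl hx.1.ne'
    · exact (hJcont.mono Ioc_subset_Icc_self).rexp
    · exact hF.mono Ioc_subset_Icc_self
  have hgint : IntegrableOn g (Ioc 0 ρ) := by
    have hdom : IntegrableOn (fun s : ℝ => s ^ (b0 - 1) * (Real.exp B * K)) (Ioc 0 ρ) := by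
      have h1 : IntervalIntegrable (fun s : ℝ => s ^ (b0 - 1)) volume 0 ρ :=
        intervalIntegral.intervalIntegrable_rpow' (by linarith)
      exact (intervalIntegrable_iff_integrableOn_Ioc_of_le hρ.le).1
        (h1.mul_const (Real.exp B * K))
    apply Integrable.mono' hdom (hgcont.aestronglyMeasurable measurableSet_Ioc)
    filter_upwards [ae_restrict_mem measurableSet_Ioc] with s hs
    have hs0 : 0 < s := hs.1
    have h1 : ‖g s‖ = s ^ (b0 - 1) * Real.exp (J s) * |F s| := by
      rw [hgdef]
      simp only [Real.norm_eq_abs, abs_mul, abs_of_pos (Real.exp_pos (J s)),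
        abs_of_nonneg (Real.rpow_nonneg hs0.le (b0 - 1))]
    rw [h1]
    have hJs : Real.exp (J s) ≤ Real.exp B :=
      Real.exp_le_exp.2 (le_trans (le_abs_self _) (hJbd s (Ioc_subset_Icc_self hs)))
    have hFs : |F s| ≤ K := hK s (Ioc_subset_Icc_self hs)
    calc s ^ (b0 - 1) * Real.exp (J s) * |F s|
        ≤ s ^ (b0 - 1) * Real.exp B * K := by
          gcongr <;> first | positivity | exact hJs | exact hFs
      _ = s ^ (b0 - 1) * (Real.exp B * K) := by ring
  have hgsub : ∀ a c : ℝ, 0 ≤ a → c ≤ ρ → a ≤ c → IntervalIntegrable g volume a c := by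
    intro a c ha hc hac
    exact (intervalIntegrable_iff_integrableOn_Ioc_of_le hac).2
      (hgint.mono_set (Ioc_subset_Ioc ha hc))
  intro y hy
  have hy0 : 0 < y := hy.1
  have key : ∀ ε ∈ Ioo 0 y, G y - ∫ s in (0:ℝ)..y, g s = G ε - ∫ s in (0:ℝ)..ε, g s := by
    intro ε hε
    have hεboundρ : ε ≤ ρ := le_trans hε.2.le hy.2
    have hsub : Icc ε y ⊆ Ioc 0 ρ := fun t ht => ⟨lt_of_lt_of_le hε.1 ht.1, le_trans ht.2 hy.2⟩
    have h1 : ∫ s in ε..y, g s = G y - G ε := by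
      apply intervalIntegral.integral_eq_sub_of_hasDeriv_right_of_le hε.2.le
        (hGcont.mono hsub)
        (fun x hx => ((hGderiv x ⟨lt_trans hε.1 hx.1, lt_of_lt_of_le hx.2 hy.2⟩).hasDerivWithinAt))
        (hgsub ε y hε.1.le hy.2 hε.2.le)
    have h2 : (∫ s in (0:ℝ)..ε, g s) + ∫ s in ε..y, g s = ∫ s in (0:ℝ)..y, g s :=
      intervalIntegral.integral_add_adjacent_intervals
        (hgsub 0 ε le_rfl hεboundρ hε.1.le) (hgsub ε y hε.1.le hy.2 hε.2.le)
    linarith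
  have hlim1 : Tendsto G (nhdsWithin 0 (Ioi 0)) (nhds 0) := by
    have hM0 : 0 ≤ M := le_trans (abs_nonneg _) (hVbd ρ ⟨hρ, le_rfl⟩)
    apply squeeze_zero_norm' (a := fun ε => ε ^ b0 * (Real.exp B * M))
    · filter_upwards [Ioo_mem_nhdsGT_of_mem (Set.mem_Ico.2 ⟨le_rfl, hy0⟩)] with ε hε
      have hε0 : 0 < ε := hε.1
      have hερ : ε ∈ Ioc 0 ρ := ⟨hε0, le_trans hε.2.le hy.2⟩
      have h1 : ‖G ε‖ = ε ^ b0 * Real.exp (J ε) * |V ε| := by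
        rw [hGdef]
        simp only [Real.norm_eq_abs, abs_mul, abs_of_pos (Real.exp_pos (J ε)),
          abs_of_nonneg (Real.rpow_nonneg hε0.le b0)]
      rw [h1]
      have hJs : Real.exp (J ε) ≤ Real.exp B :=
        Real.exp_le_exp.2 (le_trans (le_abs_self _) (hJbd ε (Ioc_subset_Icc_self hερ)))
      calc ε ^ b0 * Real.exp (J ε) * |V ε|
          ≤ ε ^ b0 * Real.exp B * M := by
            gcongr <;> first | positivity | exact hJs | exact hVbd ε hερ
        _ = ε ^ b0 * (Real.exp B * M) := by ring
    · have h1 : Tendsto (fun ε : ℝ => ε ^ b0) (nhdsWithin 0 (Ioi 0)) (nhds 0) := by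
        have := (Real.continuousAt_rpow_const 0 b0 (Or.inr hb0.le)).tendsto
        rw [Real.zero_rpow hb0.ne'] at this
        exact this.mono_left nhdsWithin_le_nhds
      simpa using h1.mul_const (Real.exp B * M)
  have hlim2 : Tendsto (fun ε => ∫ s in (0:ℝ)..ε, g s) (nhdsWithin 0 (Ioi 0)) (nhds 0) := by
    have hgIcc : IntegrableOn g (Icc 0 ρ) := by rwa [integrableOn_Icc_iff_integrableOn_Ioc]
    have hc := intervalIntegral.continuousOn_primitive (a := 0) (b := ρ) hgIcc
    have h0 := (hc 0 ⟨le_rfl, hρ.le⟩)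
    rw [ContinuousWithinAt] at h0
    simp only [Ioc_self, Measure.restrict_empty, integral_zero_measure] at h0
    have hle : nhdsWithin (0:ℝ) (Ioi 0) ≤ nhdsWithin 0 (Icc 0 ρ) := by
      rw [← nhdsWithin_Ioc_eq_nhdsGT hρ]
      exact nhdsWithin_mono _ Ioc_subset_Icc_self
    have h1 := h0.mono_left hle
    apply h1.congr'
    filter_upwards [self_mem_nhdsWithin] with x hx
    rw [intervalIntegral.integral_of_le (le_of_lt hx)]
  -- conclude G y = ∫ 0..y g
  have hGy : G y = ∫ s in (0:ℝ)..y, g s := by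
    have hconst : Tendsto (fun _ : ℝ => G y - ∫ s in (0:ℝ)..y, g s)
        (nhdsWithin 0 (Ioi 0)) (nhds (G y - ∫ s in (0:ℝ)..y, g s)) := tendsto_const_nhds
    have hvar : Tendsto (fun ε => G ε - ∫ s in (0:ℝ)..ε, g s)
        (nhdsWithin 0 (Ioi 0)) (nhds 0) := by
      simpa using hlim1.sub hlim2
    have heq : (fun _ : ℝ => G y - ∫ s in (0:ℝ)..y, g s) =ᶠ[nhdsWithin 0 (Ioi 0)]
        (fun ε => G ε - ∫ s in (0:ℝ)..ε, g s) := by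
      filter_upwards [Ioo_mem_nhdsGT_of_mem (Set.mem_Ico.2 ⟨le_rfl, hy0⟩)] with ε hε
      exact key ε hε
    have := tendsto_nhds_unique (hconst.congr' heq) hvar
    linarith
  -- final algebra
  have hIoo : (∫ s in Ioo 0 y, s ^ (b0 - 1) * Real.exp (∫ u in Ioo 0 s, h u) * F s)
      = ∫ s in (0:ℝ)..y, g s := by
    rw [intervalIntegral.integral_of_le hy0.le, integral_Ioc_eq_integral_Ioo]
    apply setIntegral_congr_fun measurableSet_Ioo
    intro s hs
    simp only [hgdef]
    rw [hJeq s hs.1.le]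
  rw [hJeq y hy0.le, hIoo, Real.rpow_neg hy0.le]
  have h1 : (0:ℝ) < y ^ b0 := Real.rpow_pos_of_pos hy0 _
  have h2 : 0 < Real.exp (J y) := Real.exp_pos _
  rw [hGdef] at hGy
  field_simp
  linear_combination hGy
end

section
/- Trace of bounded solutions of the regular-singular ODE at the singular point: let ρ > 0, α ∈ (0,1), b0 > 0, and let b : [0,ρ] → ℝ be α-Hölder continuous with b(0) = b0. Let F : [0,ρ] → ℝ be continuous, and let V : (0,ρ] → ℝ be bounded and differentiable on (0,ρ], satisfying y·V'(y) + b(y)·V(y) = F(y) for every y ∈ (0,ρ]. Then lim_{y→0⁺} V(y) = F(0)/b0. -/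
open Set Filter

/-- Monotonicity of the barrier function `g z = (V z - (L+ε)) * z ^ c` on intervals
where `V > L + ε`. -/
lemma claimA_aux (ρ δ c L ε : ℝ) (hδρ : δ ≤ ρ) (hc : 0 < c) (hε : 0 < ε)
    (b F V : ℝ → ℝ)
    (hVcont : ContinuousOn V (Set.Ioc 0 ρ))
    (hODE : ∀ y ∈ Set.Ioo 0 δ, ∃ d, HasDerivAt V d y ∧ y * d + b y * V y = F y)
    (hb : ∀ y ∈ Set.Ioc 0 δ, c ≤ b y)
    (hG : ∀ y ∈ Set.Ioc 0 δ, F y - L * b y ≤ c * ε)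
    (a y0 : ℝ) (ha : 0 < a) (hay : a < y0) (hy0 : y0 ≤ δ)
    (hgt : ∀ z ∈ Set.Ioo a y0, L + ε < V z) :
    (V y0 - (L + ε)) * y0 ^ c ≤ (V a - (L + ε)) * a ^ c := by
  set g : ℝ → ℝ := fun z => (V z - (L + ε)) * z ^ c with hgdef
  have hsub : Set.Icc a y0 ⊆ Set.Ioc 0 ρ :=
    fun z hz => ⟨lt_of_lt_of_le ha hz.1, hz.2.trans (hy0.trans hδρ)⟩
  have hgc : ContinuousOn g (Set.Icc a y0) := by
    apply ContinuousOn.mul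
    · exact (hVcont.mono hsub).sub continuousOn_const
    · intro z hz
      exact (Real.continuousAt_rpow_const z c
        (Or.inl (lt_of_lt_of_le ha hz.1).ne')).continuousWithinAt
  have hanti : AntitoneOn g (Set.Icc a y0) := by
    apply antitoneOn_of_deriv_nonpos (convex_Icc a y0) hgc
    · rw [interior_Icc]
      intro z hz
      obtain ⟨d, hd, -⟩ := hODE z ⟨ha.trans hz.1, hz.2.trans_le hy0⟩
      exact ((hd.sub_const _).mul (Real.hasDerivAt_rpow_const
        (Or.inl (ha.trans hz.1).ne'))).differentiableAt.differentiableWithinAt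
    · rw [interior_Icc]
      intro z hz
      have hz0 : 0 < z := ha.trans hz.1
      obtain ⟨d, hd, heq⟩ := hODE z ⟨hz0, hz.2.trans_le hy0⟩
      have hder : HasDerivAt g (d * z ^ c + (V z - (L + ε)) * (c * z ^ (c - 1))) z :=
        (hd.sub_const _).mul (Real.hasDerivAt_rpow_const (Or.inl hz0.ne'))
      rw [hder.deriv]
      have hzc : z ^ c = z ^ (c - 1) * z := by
        rw [show c = (c - 1) + 1 by ring, Real.rpow_add_one hz0.ne']
        ring_nf
      have hzpos : (0:ℝ) < z ^ (c - 1) := Real.rpow_pos_of_pos hz0 _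
      have hbz := hb z ⟨hz0, hz.2.le.trans hy0⟩
      have hGz := hG z ⟨hz0, hz.2.le.trans hy0⟩
      have hVz := hgt z hz
      have hdz : z * d = F z - b z * V z := by linarith
      have hrw : d * z ^ c + (V z - (L + ε)) * (c * z ^ (c - 1))
          = z ^ (c - 1) * ((F z - L * b z) - (b z - c) * (V z - L) - c * ε) := by
        rw [hzc, show d * (z ^ (c - 1) * z) = z ^ (c - 1) * (z * d) by ring, hdz]
        ring
      rw [hrw]
      apply mul_nonpos_of_nonneg_of_nonpos hzpos.le
      nlinarith [mul_nonneg (sub_nonneg.2 hbz) (by linarith : (0:ℝ) ≤ V z - L)]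
  exact hanti ⟨le_refl a, hay.le⟩ ⟨hay.le, le_refl y0⟩ hay.le

/-- One-sided trace bound for bounded solutions. -/
lemma keyLem (ρ δ c M L ε : ℝ) (hδρ : δ ≤ ρ) (hc : 0 < c) (hε : 0 < ε)
    (b F V : ℝ → ℝ)
    (hVcont : ContinuousOn V (Set.Ioc 0 ρ))
    (hODE : ∀ y ∈ Set.Ioo 0 δ, ∃ d, HasDerivAt V d y ∧ y * d + b y * V y = F y)
    (hb : ∀ y ∈ Set.Ioc 0 δ, c ≤ b y)
    (hG : ∀ y ∈ Set.Ioc 0 δ, F y - L * b y ≤ c * ε)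
    (hW : ∀ y ∈ Set.Ioc 0 δ, V y - L ≤ M) :
    ∀ y ∈ Set.Ioc 0 δ, V y - L ≤ ε := by
  by_contra h
  push_neg at h
  obtain ⟨y0, hy0, hVy0⟩ := h
  have h0 : 0 < y0 := hy0.1
  have hM : ε < M := lt_of_lt_of_le hVy0 (hW y0 hy0)
  -- Step 1: V > L + ε on all of (0, y0]
  have step1 : ∀ z ∈ Set.Ioc 0 y0, L + ε < V z := by
    by_contra h1
    push_neg at h1
    obtain ⟨y1, hy1, hVy1⟩ := h1
    have hy1y0 : y1 < y0 := lt_of_le_of_ne hy1.2 (fun hh => by rw [hh] at hVy1; linarith)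
    set T := Set.Icc y1 y0 ∩ V ⁻¹' Set.Iic (L + ε) with hT
    have hIccsub : Set.Icc y1 y0 ⊆ Set.Ioc 0 ρ :=
      fun z hz => ⟨lt_of_lt_of_le hy1.1 hz.1, hz.2.trans (hy0.2.trans hδρ)⟩
    have hclosed : IsClosed T :=
      ContinuousOn.preimage_isClosed_of_isClosed (hVcont.mono hIccsub) isClosed_Icc isClosed_Iic
    have hne : T.Nonempty := ⟨y1, ⟨le_refl _, hy1y0.le⟩, hVy1⟩
    have hbdd : BddAbove T := ⟨y0, fun z hz => hz.1.2⟩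
    set y2 := sSup T with hy2def
    have hy2T : y2 ∈ T := hclosed.csSup_mem hne hbdd
    have hy2V : V y2 ≤ L + ε := hy2T.2
    have hy2pos : 0 < y2 := lt_of_lt_of_le hy1.1 hy2T.1.1
    have hy2lt : y2 < y0 := lt_of_le_of_ne hy2T.1.2 (fun hh => by rw [hh] at hy2V; linarith)
    have hgt : ∀ z ∈ Set.Ioo y2 y0, L + ε < V z := by
      intro z hz
      by_contra hle
      push_neg at hle
      have hzT : z ∈ T := ⟨⟨hy2T.1.1.trans hz.1.le, hz.2.le⟩, hle⟩
      exact absurd (le_csSup hbdd hzT) (not_le.2 hz.1)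
    have hcl := claimA_aux ρ δ c L ε hδρ hc hε b F V hVcont hODE hb hG y2 y0
      hy2pos hy2lt hy0.2 hgt
    have h1 : (0:ℝ) < (V y0 - (L + ε)) * y0 ^ c :=
      mul_pos (by linarith) (Real.rpow_pos_of_pos h0 c)
    have h2 : (V y2 - (L + ε)) * y2 ^ c ≤ 0 :=
      mul_nonpos_of_nonpos_of_nonneg (by linarith) (Real.rpow_pos_of_pos hy2pos c).le
    linarith
  -- Step 2: contradiction with boundedness
  set q := (V y0 - (L + ε)) * y0 ^ c with hq
  have hqpos : 0 < q := mul_pos (by linarith) (Real.rpow_pos_of_pos h0 c)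
  have hM1 : 0 < M + 1 := by linarith
  set r := (q / (M + 1)) ^ c⁻¹ with hr
  have hrpos : 0 < r := Real.rpow_pos_of_pos (div_pos hqpos hM1) _
  set a := min (y0 / 2) (r / 2) with ha
  have hapos : 0 < a := lt_min (by linarith) (by linarith)
  have hay : a < y0 := lt_of_le_of_lt (min_le_left _ _) (by linarith)
  have har : a < r := lt_of_le_of_lt (min_le_right _ _) (by linarith)
  have hclaim := claimA_aux ρ δ c L ε hδρ hc hε b F V hVcont hODE hb hG a y0
    hapos hay hy0.2 (fun z hz => step1 z ⟨hapos.trans hz.1, hz.2.le⟩)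
  have hac : a ^ c < q / (M + 1) := by
    calc a ^ c < r ^ c := Real.rpow_lt_rpow hapos.le har hc
    _ = q / (M + 1) := Real.rpow_inv_rpow (div_pos hqpos hM1).le hc.ne'
  have hWa : V a - L ≤ M := hW a ⟨hapos, hay.le.trans hy0.2⟩
  have hacpos : 0 < a ^ c := Real.rpow_pos_of_pos hapos c
  have h6 : (V a - (L + ε)) * a ^ c ≤ M * a ^ c :=
    mul_le_mul_of_nonneg_right (by linarith) hacpos.le
  have h5 : a ^ c * (M + 1) < q := (lt_div_iff₀ hM1).mp hac
  nlinarith [hacpos]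

theorem stmt_9
    (ρ α b0 : ℝ) (hρ : 0 < ρ) (hα : α ∈ Set.Ioo (0:ℝ) 1) (hb0 : 0 < b0)
    (b : ℝ → ℝ) (hb0eq : b 0 = b0)
    (hb : ∃ C : ℝ, 0 ≤ C ∧ ∀ x ∈ Set.Icc 0 ρ, ∀ x' ∈ Set.Icc 0 ρ,
      |b x - b x'| ≤ C * |x - x'| ^ α)
    (F : ℝ → ℝ) (hF : ContinuousOn F (Set.Icc 0 ρ))
    (V : ℝ → ℝ) (M : ℝ) (hVbd : ∀ y ∈ Set.Ioc 0 ρ, |V y| ≤ M)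
    (hVdiff : DifferentiableOn ℝ V (Set.Ioc 0 ρ))
    (hODE : ∀ y ∈ Set.Ioc 0 ρ,
      y * derivWithin V (Set.Ioc 0 ρ) y + b y * V y = F y) :
    Filter.Tendsto V (nhdsWithin 0 (Set.Ioi 0)) (nhds (F 0 / b0)) := by
  obtain ⟨C, hC0, hC⟩ := hb
  set L := F 0 / b0 with hL
  set c := b0 / 2 with hcdef
  have hc : 0 < c := by positivity
  have hα0 : (0:ℝ) < α := hα.1
  -- Hölder bound near 0
  have hbnear : ∀ y ∈ Set.Ioc 0 ρ, |b y - b0| ≤ C * y ^ α := by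
    intro y hy
    have := hC y ⟨hy.1.le, hy.2⟩ 0 ⟨le_refl 0, hρ.le⟩
    rwa [hb0eq, sub_zero, abs_of_pos hy.1] at this
  rw [Metric.tendsto_nhdsWithin_nhds]
  intro ε hε
  have hε2 : 0 < ε / 2 := by linarith
  -- choose δ
  set δ1 := (b0 / (2 * (C + 1))) ^ α⁻¹ with hδ1
  have hδ1pos : 0 < δ1 := Real.rpow_pos_of_pos (by positivity) _
  have hF0 : ContinuousWithinAt F (Set.Icc 0 ρ) 0 := hF 0 ⟨le_refl 0, hρ.le⟩
  rw [Metric.continuousWithinAt_iff] at hF0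
  obtain ⟨δ2, hδ2pos, hF2⟩ := hF0 (c * ε / 4) (by positivity)
  set δ3 := ((c * ε / 4) / (|L| * C + 1)) ^ α⁻¹ with hδ3
  have hδ3pos : 0 < δ3 := Real.rpow_pos_of_pos (by positivity) _
  set δ := min (min δ1 (δ2 / 2)) (min δ3 ρ) with hδdef
  have hδpos : 0 < δ := lt_min (lt_min hδ1pos (by linarith)) (lt_min hδ3pos hρ)
  have hδρ : δ ≤ ρ := le_trans (min_le_right _ _) (min_le_right _ _)
  have hδδ1 : δ ≤ δ1 := le_trans (min_le_left _ _) (min_le_left _ _)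
  have hδδ2 : δ ≤ δ2 / 2 := le_trans (min_le_left _ _) (min_le_right _ _)
  have hδδ3 : δ ≤ δ3 := le_trans (min_le_right _ _) (min_le_left _ _)
  -- b ≥ c on (0, δ]
  have hbge : ∀ y ∈ Set.Ioc 0 δ, c ≤ b y := by
    intro y hy
    have hyρ : y ∈ Set.Ioc 0 ρ := ⟨hy.1, hy.2.trans hδρ⟩
    have h1 := hbnear y hyρ
    have h2 : y ^ α ≤ δ1 ^ α := Real.rpow_le_rpow hy.1.le (hy.2.trans hδδ1) hα0.le
    have h3 : δ1 ^ α = b0 / (2 * (C + 1)) :=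
      Real.rpow_inv_rpow (by positivity) hα0.ne'
    rw [h3] at h2
    have h4 : C * y ^ α ≤ b0 / 2 := by
      have : C * y ^ α ≤ C * (b0 / (2 * (C + 1))) :=
        mul_le_mul_of_nonneg_left h2 hC0
      have hCb : C * (b0 / (2 * (C + 1))) ≤ b0 / 2 := by
        rw [← mul_div_assoc, div_le_div_iff₀ (by positivity) (by norm_num : (0:ℝ) < 2)]
        nlinarith
      linarith
    have := abs_le.mp h1
    simp only [hcdef]
    linarith [this.1]
  -- |F y - L * b y| small on (0, δ]
  have hGabs : ∀ y ∈ Set.Ioc 0 δ, |F y - L * b y| ≤ c * (ε / 2) := by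
    intro y hy
    have hyρ : y ∈ Set.Ioc 0 ρ := ⟨hy.1, hy.2.trans hδρ⟩
    have hFy : |F y - F 0| < c * ε / 4 := by
      have := hF2 (x := y) ⟨hy.1.le, hyρ.2⟩
        (by rw [Real.dist_eq, sub_zero, abs_of_pos hy.1]; linarith [hy.2, hδδ2])
      rwa [Real.dist_eq] at this
    have hLb0 : L * b0 = F 0 := by
      rw [hL]; field_simp
    have hby : |b y - b0| ≤ C * y ^ α := hbnear y hyρ
    have h2 : y ^ α ≤ δ3 ^ α := Real.rpow_le_rpow hy.1.le (hy.2.trans hδδ3) hα0.le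
    have h3 : δ3 ^ α = (c * ε / 4) / (|L| * C + 1) :=
      Real.rpow_inv_rpow (by positivity) hα0.ne'
    rw [h3] at h2
    have hLCy : |L| * (C * y ^ α) ≤ c * ε / 4 := by
      have h5 : |L| * (C * y ^ α) ≤ |L| * (C * ((c * ε / 4) / (|L| * C + 1))) := by
        gcongr
      have h7 : |L| * (C * ((c * ε / 4) / (|L| * C + 1)))
          = (|L| * C) * ((c * ε / 4) / (|L| * C + 1)) := by ring
      have h8 : (|L| * C) * ((c * ε / 4) / (|L| * C + 1))
          ≤ (|L| * C + 1) * ((c * ε / 4) / (|L| * C + 1)) :=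
        mul_le_mul_of_nonneg_right (by linarith) (by positivity)
      have h9 : (|L| * C + 1) * ((c * ε / 4) / (|L| * C + 1)) = c * ε / 4 := by
        field_simp
      linarith
    have hsplit : F y - L * b y = (F y - F 0) + L * (b0 - b y) := by
      rw [← hLb0]; ring
    calc |F y - L * b y| = |(F y - F 0) + L * (b0 - b y)| := by rw [hsplit]
    _ ≤ |F y - F 0| + |L * (b0 - b y)| := abs_add_le _ _
    _ = |F y - F 0| + |L| * |b y - b0| := by rw [abs_mul, abs_sub_comm b0 (b y)]
    _ ≤ c * ε / 4 + |L| * (C * y ^ α) := add_le_add hFy.le (mul_le_mul_of_nonneg_left hby (abs_nonneg L))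
    _ ≤ c * ε / 4 + c * ε / 4 := by linarith
    _ = c * (ε / 2) := by ring
  -- pointwise ODE with genuine derivatives
  have hODE' : ∀ y ∈ Set.Ioo 0 δ, ∃ d, HasDerivAt V d y ∧ y * d + b y * V y = F y := by
    intro y hy
    have hyρ : y ∈ Set.Ioc 0 ρ := ⟨hy.1, (hy.2.trans_le hδρ).le⟩
    have hmem : Set.Ioc 0 ρ ∈ nhds y := Ioc_mem_nhds hy.1 (hy.2.trans_le hδρ)
    have hdiff : DifferentiableAt ℝ V y := (hVdiff y hyρ).differentiableAt hmem
    refine ⟨deriv V y, hdiff.hasDerivAt, ?_⟩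
    rw [← derivWithin_of_mem_nhds hmem]
    exact hODE y hyρ
  have hVcont : ContinuousOn V (Set.Ioc 0 ρ) := hVdiff.continuousOn
  set M' := M + |L| with hM'
  have hW1 : ∀ y ∈ Set.Ioc 0 δ, V y - L ≤ M' := by
    intro y hy
    have := hVbd y ⟨hy.1, hy.2.trans hδρ⟩
    have h1 := abs_le.mp this
    have h2 := abs_nonneg L
    have h3 := neg_abs_le L
    have h4 := le_abs_self L
    simp only [hM']
    linarith
  have hW2 : ∀ y ∈ Set.Ioc 0 δ, (-V y) - (-L) ≤ M' := by
    intro y hy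
    have := hVbd y ⟨hy.1, hy.2.trans hδρ⟩
    have h1 := abs_le.mp this
    have h3 := neg_abs_le L
    have h4 := le_abs_self L
    simp only [hM']
    linarith
  have h1 := keyLem ρ δ c M' L (ε / 2) hδρ hc hε2 b F V hVcont hODE' hbge
    (fun y hy => (abs_le.mp (hGabs y hy)).2) hW1
  have hODE'' : ∀ y ∈ Set.Ioo 0 δ, ∃ d, HasDerivAt (fun z => -V z) d y ∧
      y * d + b y * (-V y) = -F y := by
    intro y hy
    obtain ⟨d, hd, heq⟩ := hODE' y hy
    exact ⟨-d, hd.neg, by linarith⟩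
  have hG2 : ∀ y ∈ Set.Ioc 0 δ, (-F y) - (-L) * b y ≤ c * (ε / 2) := by
    intro y hy
    have := (abs_le.mp (hGabs y hy)).1
    linarith
  have h2 := keyLem ρ δ c M' (-L) (ε / 2) hδρ hc hε2 b (fun y => -F y)
    (fun y => -V y) hVcont.neg hODE'' hbge hG2 hW2
  refine ⟨δ, hδpos, fun {y} hy hdist => ?_⟩
  have hy0 : 0 < y := hy
  have hyδ : y ≤ δ := by
    rw [Real.dist_eq, sub_zero, abs_of_pos hy0] at hdist
    exact hdist.le
  have ha := h1 y ⟨hy0, hyδ⟩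
  have hb' := h2 y ⟨hy0, hyδ⟩
  rw [Real.dist_eq]
  rw [abs_lt]
  constructor <;> [linarith; linarith]
end

section
/- Hölder estimate for the regular-singular ODE (Lemma 4.5, case k = 0, single fiber): let ρ > 0, α ∈ (0,1), b0 > 0, and let b : [0,ρ] → ℝ be α-Hölder continuous with b(0) = b0. Let F : [0,ρ] → ℝ be α-Hölder continuous, and let V : (0,ρ] → ℝ be bounded and differentiable on (0,ρ], satisfying y·V'(y) + b(y)·V(y) = F(y) for every y ∈ (0,ρ]. Then: (a) V extends to a function V̄ : [0,ρ] → ℝ that is α-Hölder continuous on [0,ρ] (with V̄(0) = F(0)/b0); and (b) the function y ↦ y·V'(y) on (0,ρ] extends to an α-Hölder continuous function on [0,ρ] with value 0 at y = 0. -/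
open Set


lemma my_rpow_sub_rpow_le {x y a : ℝ} (hx : 0 ≤ x) (hxy : x ≤ y) (h0 : 0 ≤ a) (h1 : a ≤ 1) :
    y ^ a - x ^ a ≤ (y - x) ^ a := by
  have hyx : 0 ≤ y - x := sub_nonneg.2 hxy
  have h := NNReal.rpow_add_le_add_rpow ((y - x).toNNReal) (x.toNNReal) h0 h1
  have h2 := NNReal.coe_le_coe.2 h
  push_cast [NNReal.coe_rpow, Real.coe_toNNReal _ hyx, Real.coe_toNNReal _ hx] at h2
  have hb : y - x + x = y := by ring
  rw [hb] at h2
  linarith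


/-- Barrier/maximum-principle lemma: a bounded function on (0,δ) whose derivative satisfies
`u' ≤ -β u / y` wherever `u > 0` must be nonpositive. -/
lemma my_barrier {δ β Mu : ℝ} (hβ : 0 < β) (u : ℝ → ℝ)
    (hdiff : ∀ y ∈ Ioo (0:ℝ) δ, DifferentiableAt ℝ u y)
    (hbd : ∀ y ∈ Ioo (0:ℝ) δ, u y ≤ Mu)
    (hkey : ∀ y ∈ Ioo (0:ℝ) δ, 0 < u y → deriv u y ≤ -β * u y / y) :
    ∀ y ∈ Ioo (0:ℝ) δ, u y ≤ 0 := by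
  intro y0 hy0
  by_contra hpos
  push_neg at hpos
  set g : ℝ → ℝ := fun t => u t * t ^ β with hg
  -- derivative facts for g
  have hgderiv : ∀ t ∈ Ioo (0:ℝ) δ, HasDerivAt g
      (deriv u t * t ^ β + u t * (β * t ^ (β - 1))) t := by
    intro t ht
    have h1 : HasDerivAt u (deriv u t) t := (hdiff t ht).hasDerivAt
    have h2 : HasDerivAt (fun s : ℝ => s ^ β) (β * t ^ (β - 1)) t := by
      simpa [mul_comm] using Real.hasDerivAt_rpow_const (p := β) (Or.inl (ne_of_gt ht.1))
    exact h1.mul h2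
  have hgcont : ∀ t ∈ Ioo (0:ℝ) δ, ContinuousAt g t :=
    fun t ht => ((hgderiv t ht).differentiableAt).continuousAt
  -- local antitonicity near points with u > 0
  have loc : ∀ y ∈ Ioo (0:ℝ) δ, 0 < u y →
      ∃ ε > 0, 0 < y - ε ∧ ∀ t ∈ Icc (y - ε) y, g y ≤ g t := by
    intro y hy hu
    have hev1 : ∀ᶠ t in nhds y, 0 < u t :=
      (hdiff y hy).continuousAt.eventually_mem (isOpen_Ioi.mem_nhds hu)
    have hev2 : ∀ᶠ t in nhds y, t ∈ Ioo (0:ℝ) δ := isOpen_Ioo.eventually_mem hy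
    obtain ⟨ε0, hε0, hball⟩ := Metric.eventually_nhds_iff.1 (hev1.and hev2)
    set ε := min (ε0 / 2) (y / 2) with hε
    have hεpos : 0 < ε := lt_min (by linarith) (by linarith [hy.1])
    have hεy : 0 < y - ε := by
      have : ε ≤ y / 2 := min_le_right _ _
      linarith [hy.1]
    have hsub : ∀ t ∈ Icc (y - ε) y, 0 < u t ∧ t ∈ Ioo (0:ℝ) δ := by
      intro t ht
      apply hball
      rw [Real.dist_eq, abs_lt]
      constructor
      · have := ht.1; have : ε ≤ ε0 / 2 := min_le_left _ _; linarith [ht.1]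
      · linarith [ht.2, hε0]
    have hanti : AntitoneOn g (Icc (y - ε) y) := by
      apply antitoneOn_of_deriv_nonpos (convex_Icc _ _)
      · intro t ht
        exact (hgcont t (hsub t ht).2).continuousWithinAt
      · rw [interior_Icc]
        intro t ht
        exact ((hgderiv t (hsub t (Ioo_subset_Icc_self ht)).2).differentiableAt).differentiableWithinAt
      · rw [interior_Icc]
        intro t ht
        obtain ⟨hut, htm⟩ := hsub t (Ioo_subset_Icc_self ht)
        rw [(hgderiv t htm).deriv]
        have hder := hkey t htm hut
        have htpos : (0:ℝ) < t := htm.1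
        have hrpow : (0:ℝ) < t ^ β := Real.rpow_pos_of_pos htpos β
        have h1 : deriv u t * t ^ β ≤ (-β * u t / t) * t ^ β :=
          mul_le_mul_of_nonneg_right hder hrpow.le
        have h2 : (-β * u t / t) * t ^ β + u t * (β * t ^ (β - 1)) = 0 := by
          rw [Real.rpow_sub_one (ne_of_gt htpos)]
          field_simp
          ring
        linarith
    exact ⟨ε, hεpos, hεy, fun t ht => hanti ht ⟨by linarith [ht.1, hεpos], le_refl y⟩ ht.2⟩
  -- the propagation set
  set Q : Set ℝ := {y | y ∈ Ioc 0 y0 ∧ ∀ t ∈ Icc y y0, g y0 ≤ g t} with hQ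
  have hy0Q : y0 ∈ Q := by
    refine ⟨⟨hy0.1, le_refl _⟩, fun t ht => ?_⟩
    have : t = y0 := le_antisymm ht.2 ht.1
    rw [this]
  have hQne : Q.Nonempty := ⟨y0, hy0Q⟩
  have hQbdd : BddBelow Q := ⟨0, fun q hq => (hq.1.1).le⟩
  have hgy0pos : 0 < g y0 := mul_pos hpos (Real.rpow_pos_of_pos hy0.1 β)
  have hQpos : ∀ q ∈ Q, ∀ t ∈ Icc q y0, 0 < u t := by
    intro q hq t ht
    have hgt : g y0 ≤ g t := hq.2 t ht
    have htpos : 0 < t := lt_of_lt_of_le hq.1.1 ht.1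
    by_contra hut
    push_neg at hut
    have : g t ≤ 0 := mul_nonpos_of_nonpos_of_nonneg hut (Real.rpow_nonneg htpos.le β)
    linarith
  have hQup : ∀ y ∈ Ioc (0:ℝ) y0, (∃ q ∈ Q, q ≤ y) → y ∈ Q := by
    rintro y hy ⟨q, hq, hqy⟩
    exact ⟨hy, fun t ht => hq.2 t ⟨le_trans hqy ht.1, ht.2⟩⟩
  set s := sInf Q with hs
  have hs0 : 0 ≤ s := le_csInf hQne fun q hq => hq.1.1.le
  have hsy0 : s ≤ y0 := csInf_le hQbdd hy0Q
  by_cases hspos : 0 < s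
  · -- s ∈ Q
    have hsQ : s ∈ Q := by
      refine ⟨⟨hspos, hsy0⟩, fun t ht => ?_⟩
      rcases eq_or_lt_of_le ht.1 with heq | hlt
      · -- t = s
        rcases eq_or_lt_of_le hsy0 with hsy | hsy
        · rw [← heq, ← hsy]
        · -- s < y0, use continuity from the right
          have hev : ∀ᶠ r in nhdsWithin s (Ioi s), g y0 ≤ g r := by
            filter_upwards [Ioc_mem_nhdsGT hsy] with r hr
            obtain ⟨q, hq, hqr⟩ := exists_lt_of_csInf_lt hQne (hs ▸ hr.1)
            exact (hQup r ⟨lt_trans hspos hr.1, hr.2⟩ ⟨q, hq, hqr.le⟩).2 r ⟨le_refl r, hr.2⟩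
          have hsIoo : s ∈ Ioo (0:ℝ) δ := ⟨hspos, lt_of_le_of_lt hsy0 hy0.2⟩
          have hcont : ContinuousAt g s := hgcont s hsIoo
          have := ge_of_tendsto (hcont.continuousWithinAt.tendsto) hev
          rw [← heq]; exact this
      · -- s < t
        obtain ⟨q, hq, hqt⟩ := exists_lt_of_csInf_lt hQne (hs ▸ hlt)
        exact hq.2 t ⟨hqt.le, ht.2⟩
    have hus : 0 < u s := hQpos s hsQ s ⟨le_refl s, hsy0⟩
    have hsIoo : s ∈ Ioo (0:ℝ) δ := ⟨hspos, lt_of_le_of_lt hsy0 hy0.2⟩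
    obtain ⟨ε, hε, hsε, hloc⟩ := loc s hsIoo hus
    have hmemQ : s - ε ∈ Q := by
      refine ⟨⟨hsε, by linarith⟩, fun t ht => ?_⟩
      rcases le_total t s with h | h
      · exact le_trans (hsQ.2 s ⟨le_refl s, hsy0⟩) (hloc t ⟨ht.1, h⟩)
      · exact hsQ.2 t ⟨h, ht.2⟩
    have := csInf_le hQbdd hmemQ
    rw [← hs] at this
    linarith
  · -- s = 0 : positivity propagates to 0, contradiction with boundedness
    have hseq : s = 0 := le_antisymm (not_lt.1 hspos) hs0
    have hall : ∀ y ∈ Ioc (0:ℝ) y0, y ∈ Q := by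
      intro y hy
      obtain ⟨q, hq, hqy⟩ := exists_lt_of_csInf_lt hQne (by rw [← hs, hseq]; exact hy.1)
      exact hQup y hy ⟨q, hq, hqy.le⟩
    set Mu' := max Mu 0 + 1 with hMu'
    have hMu'pos : 0 < Mu' := by positivity
    set K := g y0 with hK
    set r := (K / Mu') ^ (β⁻¹ : ℝ) with hr
    have hrpos : 0 < r := Real.rpow_pos_of_pos (div_pos hgy0pos hMu'pos) _
    set y1 := min y0 r with hy1
    have hy1pos : 0 < y1 := lt_min hy0.1 hrpos
    have hy1mem : y1 ∈ Ioc (0:ℝ) y0 := ⟨hy1pos, min_le_left _ _⟩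
    have hy1Ioo : y1 ∈ Ioo (0:ℝ) δ := ⟨hy1pos, lt_of_le_of_lt (min_le_left _ _) hy0.2⟩
    have hQ1 := hall y1 hy1mem
    have hgy1 : K ≤ g y1 := hQ1.2 y1 ⟨le_refl _, hy1mem.2⟩
    have hu1 : 0 < u y1 := hQpos y1 hQ1 y1 ⟨le_refl _, hy1mem.2⟩
    have hy1β : y1 ^ β ≤ K / Mu' := by
      calc y1 ^ β ≤ r ^ β := Real.rpow_le_rpow hy1pos.le (min_le_right _ _) hβ.le
        _ = K / Mu' := Real.rpow_inv_rpow (div_pos hgy0pos hMu'pos).le (ne_of_gt hβ)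
    have h1 : K ≤ u y1 * (K / Mu') := by
      calc K ≤ u y1 * y1 ^ β := hgy1
        _ ≤ u y1 * (K / Mu') := mul_le_mul_of_nonneg_left hy1β hu1.le
    have h2 : Mu' ≤ u y1 := by
      rw [div_eq_mul_inv, ← mul_assoc] at h1
      have h3 : Mu' * K ≤ u y1 * K := by
        have := mul_le_mul_of_nonneg_right h1 hMu'pos.le
        have he : u y1 * K * Mu'⁻¹ * Mu' = u y1 * K := by field_simp
        rw [he] at this
        linarith [this]
      exact le_of_mul_le_mul_right h3 hgy0pos
    have hb1 := hbd y1 hy1Ioo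
    have hb2 : Mu ≤ max Mu 0 := le_max_left _ _
    have : Mu' = max Mu 0 + 1 := hMu'
    linarith



/-- Upper estimate: `W ≤ (C₁/β) y^a` from the differential inequality. -/
lemma my_upper {δ β C₁ Mu a : ℝ} (hβ : 0 < β) (hC₁ : 0 ≤ C₁) (ha : 0 < a)
    (W : ℝ → ℝ)
    (hdiff : ∀ y ∈ Ioo (0:ℝ) δ, DifferentiableAt ℝ W y)
    (hbd : ∀ y ∈ Ioo (0:ℝ) δ, W y ≤ Mu)
    (hkey : ∀ y ∈ Ioo (0:ℝ) δ, 0 < W y → y * deriv W y ≤ C₁ * y ^ a - β * W y) :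
    ∀ y ∈ Ioo (0:ℝ) δ, W y ≤ (C₁ / β) * y ^ a := by
  set A := C₁ / β with hA
  have hA0 : 0 ≤ A := div_nonneg hC₁ hβ.le
  set u : ℝ → ℝ := fun y => W y - A * y ^ a with hu
  have hud : ∀ y ∈ Ioo (0:ℝ) δ, HasDerivAt u (deriv W y - A * (a * y ^ (a - 1))) y := by
    intro y hy
    have h1 : HasDerivAt W (deriv W y) y := (hdiff y hy).hasDerivAt
    have h2 : HasDerivAt (fun s : ℝ => s ^ a) (a * y ^ (a - 1)) y :=
      Real.hasDerivAt_rpow_const (Or.inl (ne_of_gt hy.1))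
    exact h1.sub (h2.const_mul A)
  have key : ∀ y ∈ Ioo (0:ℝ) δ, u y ≤ 0 := by
    apply my_barrier (Mu := Mu) hβ
    · exact fun y hy => (hud y hy).differentiableAt
    · intro y hy
      have : 0 ≤ A * y ^ a := mul_nonneg hA0 (Real.rpow_nonneg hy.1.le a)
      have := hbd y hy
      simp only [hu]; linarith
    · intro y hy hupos
      have hypos := hy.1
      have hWpos : 0 < W y := by
        have : 0 ≤ A * y ^ a := mul_nonneg hA0 (Real.rpow_nonneg hy.1.le a)
        have : u y ≤ W y := by simp only [hu]; linarith
        linarith [hupos]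
      have hW := hkey y hy hWpos
      have hderu : deriv u y = deriv W y - A * (a * y ^ (a - 1)) := (hud y hy).deriv
      have hmul : y * deriv u y ≤ -β * u y := by
        rw [hderu]
        have hpow : y * (a * y ^ (a - 1)) = a * y ^ a := by
          rw [Real.rpow_sub_one (ne_of_gt hypos)]
          field_simp
        have expand : y * (deriv W y - A * (a * y ^ (a - 1)))
            = y * deriv W y - A * (y * (a * y ^ (a - 1))) := by ring
        rw [expand, hpow]
        have hβA : β * A = C₁ := by rw [hA]; field_simp
        have hupos' : u y = W y - A * y ^ a := rfl
        have hrp : 0 ≤ y ^ a := Real.rpow_nonneg hypos.le a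
        nlinarith [mul_nonneg (mul_nonneg hA0 ha.le) hrp]
      rw [div_eq_mul_inv]
      calc deriv u y = (y * deriv u y) * y⁻¹ := by field_simp
        _ ≤ (-β * u y) * y⁻¹ := by
            apply mul_le_mul_of_nonneg_right hmul (inv_pos.2 hypos).le
  intro y hy
  have := key y hy
  simp only [hu] at this
  linarith

/-- Hölder continuity from the derivative bound `|f'| ≤ K y^(a-1)`. -/
lemma my_holder_step {ρ K a : ℝ} (ha : 0 < a) (ha1 : a ≤ 1) (hK : 0 ≤ K)
    (f : ℝ → ℝ)
    (hdiff : ∀ y ∈ Ioo (0:ℝ) ρ, DifferentiableAt ℝ f y)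
    (hcont : ContinuousOn f (Ioc (0:ℝ) ρ))
    (hder : ∀ y ∈ Ioo (0:ℝ) ρ, |deriv f y| ≤ K * y ^ (a - 1)) :
    ∀ x ∈ Ioc (0:ℝ) ρ, ∀ x' ∈ Ioc (0:ℝ) ρ, x ≤ x' →
      |f x' - f x| ≤ (K / a) * (x' - x) ^ a := by
  intro x hx x' hx' hxx'
  rcases eq_or_lt_of_le hxx' with heq | hlt
  · rw [← heq]
    simp [Real.zero_rpow (ne_of_gt ha)]
  have hmono : ∀ (σ : ℝ), σ = 1 ∨ σ = -1 →
      σ * (f x' - f x) ≤ (K / a) * (x' ^ a - x ^ a) := by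
    intro σ hσ
    set φ : ℝ → ℝ := fun t => (K / a) * t ^ a - σ * f t with hφ
    have hφmono : MonotoneOn φ (Icc x x') := by
      apply monotoneOn_of_deriv_nonneg (convex_Icc _ _)
      · intro t ht
        apply ContinuousWithinAt.sub
        · exact (Real.continuousAt_rpow_const t a
            (Or.inl (ne_of_gt (lt_of_lt_of_le hx.1 ht.1)))).continuousWithinAt.const_smul (K/a)
            |>.congr (fun s _ => by simp [smul_eq_mul]) (by simp [smul_eq_mul])
        · exact (((hcont t ⟨lt_of_lt_of_le hx.1 ht.1, le_trans ht.2 hx'.2⟩).mono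
            (fun s hs => ⟨lt_of_lt_of_le hx.1 hs.1, le_trans hs.2 hx'.2⟩ : Icc x x' ⊆ Ioc 0 ρ))).const_smul σ
            |>.congr (fun s _ => by simp [smul_eq_mul]) (by simp [smul_eq_mul])
      all_goals rw [interior_Icc]
      · intro t ht
        have htm : t ∈ Ioo (0:ℝ) ρ := ⟨lt_trans hx.1 ht.1, lt_of_lt_of_le ht.2 hx'.2⟩
        have h2 : HasDerivAt (fun s : ℝ => s ^ a) (a * t ^ (a - 1)) t :=
          Real.hasDerivAt_rpow_const (Or.inl (ne_of_gt htm.1))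
        exact (((h2.const_mul (K/a)).sub (((hdiff t htm).hasDerivAt).const_mul σ)).differentiableAt).differentiableWithinAt
      · intro t ht
        have htm : t ∈ Ioo (0:ℝ) ρ := ⟨lt_trans hx.1 ht.1, lt_of_lt_of_le ht.2 hx'.2⟩
        have h2 : HasDerivAt (fun s : ℝ => s ^ a) (a * t ^ (a - 1)) t :=
          Real.hasDerivAt_rpow_const (Or.inl (ne_of_gt htm.1))
        have hφd : HasDerivAt φ ((K/a) * (a * t ^ (a - 1)) - σ * deriv f t) t :=
          (h2.const_mul (K/a)).sub (((hdiff t htm).hasDerivAt).const_mul σ)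
        rw [hφd.deriv]
        have hKa : (K/a) * (a * t ^ (a - 1)) = K * t ^ (a - 1) := by
          field_simp
        rw [hKa]
        have habs := hder t htm
        have hσf : σ * deriv f t ≤ |deriv f t| := by
          rcases hσ with h | h <;> rw [h]
          · simpa using le_abs_self (deriv f t)
          · simpa using neg_le_abs (deriv f t)
        linarith
    have := hφmono ⟨le_refl x, hxx'⟩ ⟨hxx', le_refl x'⟩ hxx'
    simp only [hφ] at this
    linarith
  have h1 := hmono 1 (Or.inl rfl)
  have h2 := hmono (-1) (Or.inr rfl)
  have hsub : x' ^ a - x ^ a ≤ (x' - x) ^ a :=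
    my_rpow_sub_rpow_le hx.1.le hxx' ha.le ha1
  have hKa : 0 ≤ K / a := div_nonneg hK ha.le
  rw [abs_le]
  constructor
  · nlinarith
  · nlinarith

theorem stmt_10
    (ρ α b0 : ℝ) (hρ : 0 < ρ) (hα : α ∈ Set.Ioo (0:ℝ) 1) (hb0 : 0 < b0)
    (b : ℝ → ℝ) (hb0eq : b 0 = b0)
    (hb : ∃ C : ℝ, 0 ≤ C ∧ ∀ x ∈ Set.Icc 0 ρ, ∀ x' ∈ Set.Icc 0 ρ,
      |b x - b x'| ≤ C * |x - x'| ^ α)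
    (F : ℝ → ℝ)
    (hF : ∃ C : ℝ, 0 ≤ C ∧ ∀ x ∈ Set.Icc 0 ρ, ∀ x' ∈ Set.Icc 0 ρ,
      |F x - F x'| ≤ C * |x - x'| ^ α)
    (V : ℝ → ℝ) (M : ℝ) (hVbd : ∀ y ∈ Set.Ioc 0 ρ, |V y| ≤ M)
    (hVdiff : DifferentiableOn ℝ V (Set.Ioc 0 ρ))
    (hODE : ∀ y ∈ Set.Ioc 0 ρ,
      y * derivWithin V (Set.Ioc 0 ρ) y + b y * V y = F y) :
    (∃ Vbar : ℝ → ℝ, (∀ y ∈ Set.Ioc 0 ρ, Vbar y = V y) ∧ Vbar 0 = F 0 / b0 ∧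
      ∃ C : ℝ, 0 ≤ C ∧ ∀ x ∈ Set.Icc 0 ρ, ∀ x' ∈ Set.Icc 0 ρ,
        |Vbar x - Vbar x'| ≤ C * |x - x'| ^ α) ∧
    (∃ G : ℝ → ℝ, (∀ y ∈ Set.Ioc 0 ρ, G y = y * derivWithin V (Set.Ioc 0 ρ) y) ∧
      G 0 = 0 ∧
      ∃ C : ℝ, 0 ≤ C ∧ ∀ x ∈ Set.Icc 0 ρ, ∀ x' ∈ Set.Icc 0 ρ,
        |G x - G x'| ≤ C * |x - x'| ^ α) := by
  obtain ⟨Cb, hCb0, hCb⟩ := hb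
  obtain ⟨CF, hCF0, hCF⟩ := hF
  obtain ⟨ha0, ha1⟩ := hα
  set c := F 0 / b0 with hc
  have hb0c : b0 * c = F 0 := by rw [hc]; field_simp
  have hM0 : 0 ≤ M := le_trans (abs_nonneg _) (hVbd ρ ⟨hρ, le_refl ρ⟩)
  have h0mem : (0:ℝ) ∈ Icc (0:ℝ) ρ := ⟨le_refl 0, hρ.le⟩
  -- ODE on the open interval with plain deriv
  have hmemnhds : ∀ y ∈ Ioo (0:ℝ) ρ, Ioc (0:ℝ) ρ ∈ nhds y := fun y hy =>
    Filter.mem_of_superset (isOpen_Ioo.mem_nhds hy) Ioo_subset_Ioc_self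
  have hVAt : ∀ y ∈ Ioo (0:ℝ) ρ, DifferentiableAt ℝ V y := fun y hy =>
    (hVdiff y (Ioo_subset_Ioc_self hy)).differentiableAt (hmemnhds y hy)
  have hODE' : ∀ y ∈ Ioo (0:ℝ) ρ, y * deriv V y + b y * V y = F y := by
    intro y hy
    have h := hODE y (Ioo_subset_Ioc_self hy)
    rwa [derivWithin_of_mem_nhds (hmemnhds y hy)] at h
  -- the inhomogeneity H and its bound
  set C₁ := CF + Cb * |c| with hC₁
  have hC₁0 : 0 ≤ C₁ := by positivity
  have hH : ∀ y ∈ Ioc (0:ℝ) ρ, |F y - F 0 - (b y - b0) * c| ≤ C₁ * y ^ α := by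
    intro y hy
    have hymem : y ∈ Icc (0:ℝ) ρ := ⟨hy.1.le, hy.2⟩
    have h1 := hCF y hymem 0 h0mem
    have h2 := hCb y hymem 0 h0mem
    rw [hb0eq] at h2
    have hyabs : |y - 0| = y := by rw [sub_zero, abs_of_pos hy.1]
    rw [hyabs] at h1 h2
    calc |F y - F 0 - (b y - b0) * c| ≤ |F y - F 0| + |(b y - b0) * c| := abs_sub _ _
      _ ≤ CF * y ^ α + Cb * y ^ α * |c| := by
          rw [abs_mul]
          exact add_le_add h1 (mul_le_mul_of_nonneg_right h2 (abs_nonneg c))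
      _ = C₁ * y ^ α := by rw [hC₁]; ring
  -- choice of δ where b ≥ b0/2
  set r0 := (b0 / (2 * (Cb + 1))) ^ (α⁻¹ : ℝ) with hr0
  have hfrac : 0 < b0 / (2 * (Cb + 1)) := by positivity
  have hr0pos : 0 < r0 := Real.rpow_pos_of_pos hfrac _
  set δ := min ρ r0 with hδdef
  have hδpos : 0 < δ := lt_min hρ hr0pos
  have hδρ : δ ≤ ρ := min_le_left _ _
  have hbge : ∀ y ∈ Ioc (0:ℝ) δ, b0 / 2 ≤ b y := by
    intro y hy
    have hyρ : y ∈ Icc (0:ℝ) ρ := ⟨hy.1.le, le_trans hy.2 hδρ⟩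
    have h2 := hCb y hyρ 0 h0mem
    rw [hb0eq, sub_zero, abs_of_pos hy.1] at h2
    have hyr0 : y ^ α ≤ b0 / (2 * (Cb + 1)) := by
      calc y ^ α ≤ r0 ^ α :=
            Real.rpow_le_rpow hy.1.le (le_trans hy.2 (min_le_right _ _)) ha0.le
        _ = b0 / (2 * (Cb + 1)) := Real.rpow_inv_rpow hfrac.le (ne_of_gt ha0)
    have hCby : Cb * y ^ α ≤ b0 / 2 := by
      calc Cb * y ^ α ≤ Cb * (b0 / (2 * (Cb + 1))) :=
            mul_le_mul_of_nonneg_left hyr0 hCb0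
        _ ≤ b0 / 2 := by
            rw [← mul_div_assoc, div_le_div_iff₀ (by positivity) (by norm_num : (0:ℝ) < 2)]
            nlinarith
    have := (abs_le.1 (le_trans h2 hCby)).1
    linarith
  set β := b0 / 2 with hβdef
  have hβpos : 0 < β := by positivity
  -- pointwise bound |V y - c| ≤ A y^α near 0 via the barrier lemma
  set A := C₁ / β with hA
  have hA0 : 0 ≤ A := div_nonneg hC₁0 hβpos.le
  have hIooδρ : Ioo (0:ℝ) δ ⊆ Ioo (0:ℝ) ρ := fun t ht => ⟨ht.1, lt_of_lt_of_le ht.2 hδρ⟩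
  have hkey_gen : ∀ y ∈ Ioo (0:ℝ) δ, y * deriv V y = (F y - F 0 - (b y - b0) * c) - b y * (V y - c) := by
    intro y hy
    have h := hODE' y (hIooδρ hy)
    linear_combination h - hb0c
  have hup : ∀ y ∈ Ioo (0:ℝ) δ, V y - c ≤ A * y ^ α := by
    apply my_upper hβpos hC₁0 ha0 (fun y => V y - c) (Mu := M + |c|)
    · intro y hy
      exact ((hVAt y (hIooδρ hy)).sub (differentiableAt_const c))
    · intro y hy
      have := hVbd y (Ioo_subset_Ioc_self (hIooδρ hy))
      have := abs_le.1 this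
      have := abs_le.1 (le_refl |c|)
      have h1 : -|c| ≤ c := neg_abs_le c
      linarith [(abs_le.1 (hVbd y (Ioo_subset_Ioc_self (hIooδρ hy)))).2]
    · intro y hy hW
      have hderW : deriv (fun y => V y - c) y = deriv V y := by
        have := ((hVAt y (hIooδρ hy)).hasDerivAt.sub_const c).deriv
        simpa using this
      rw [hderW, hkey_gen y hy]
      have hHy := (abs_le.1 (hH y (Ioo_subset_Ioc_self (hIooδρ hy)))).2
      have hbW : β * (V y - c) ≤ b y * (V y - c) :=
        mul_le_mul_of_nonneg_right (hbge y (Ioo_subset_Ioc_self hy)) hW.le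
      linarith
  have hdown : ∀ y ∈ Ioo (0:ℝ) δ, c - V y ≤ A * y ^ α := by
    apply my_upper hβpos hC₁0 ha0 (fun y => c - V y) (Mu := M + |c|)
    · intro y hy
      exact ((differentiableAt_const c).sub (hVAt y (hIooδρ hy)))
    · intro y hy
      have h1 : c ≤ |c| := le_abs_self c
      linarith [(abs_le.1 (hVbd y (Ioo_subset_Ioc_self (hIooδρ hy)))).1]
    · intro y hy hW
      have hderW : deriv (fun y => c - V y) y = -deriv V y := by
        have := ((hVAt y (hIooδρ hy)).hasDerivAt.const_sub c).deriv
        simpa using this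
      rw [hderW]
      have hkg := hkey_gen y hy
      have hHy := (abs_le.1 (hH y (Ioo_subset_Ioc_self (hIooδρ hy)))).1
      have hbW : β * (c - V y) ≤ b y * (c - V y) :=
        mul_le_mul_of_nonneg_right (hbge y (Ioo_subset_Ioc_self hy)) hW.le
      have hexp : b y * (c - V y) = - (b y * (V y - c)) := by ring
      rw [hexp] at hbW
      linarith
  have habsδ : ∀ y ∈ Ioo (0:ℝ) δ, |V y - c| ≤ A * y ^ α := by
    intro y hy
    rw [abs_le]
    exact ⟨by linarith [hdown y hy], hup y hy⟩
  -- global bound on (0, ρ]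
  have hδα : 0 < δ ^ α := Real.rpow_pos_of_pos hδpos α
  set A' := max A ((M + |c|) / δ ^ α) with hA'
  have hA'0 : 0 ≤ A' := le_trans hA0 (le_max_left _ _)
  have habs : ∀ y ∈ Ioc (0:ℝ) ρ, |V y - c| ≤ A' * y ^ α := by
    intro y hy
    by_cases hyδ : y < δ
    · calc |V y - c| ≤ A * y ^ α := habsδ y ⟨hy.1, hyδ⟩
        _ ≤ A' * y ^ α :=
          mul_le_mul_of_nonneg_right (le_max_left _ _) (Real.rpow_nonneg hy.1.le α)
    · push_neg at hyδ
      have h1 : |V y - c| ≤ M + |c| := by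
        have := abs_sub (V y) c
        calc |V y - c| ≤ |V y| + |c| := abs_sub _ _
          _ ≤ M + |c| := add_le_add (hVbd y hy) (le_refl _)
      have h2 : δ ^ α ≤ y ^ α := Real.rpow_le_rpow hδpos.le hyδ ha0.le
      calc |V y - c| ≤ M + |c| := h1
        _ = ((M + |c|) / δ ^ α) * δ ^ α := by field_simp
        _ ≤ A' * y ^ α := by
            apply mul_le_mul (le_max_right _ _) h2 hδα.le hA'0
  -- bound for b on [0, ρ]
  set Bb := b0 + Cb * ρ ^ α with hBb
  have hBb0 : 0 ≤ Bb := by positivity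
  have hbabs : ∀ x ∈ Icc (0:ℝ) ρ, |b x| ≤ Bb := by
    intro x hx
    have h2 := hCb x hx 0 h0mem
    rw [hb0eq, sub_zero] at h2
    have hxα : |x| ^ α ≤ ρ ^ α :=
      Real.rpow_le_rpow (abs_nonneg x) (by rw [abs_of_nonneg hx.1]; exact hx.2) ha0.le
    calc |b x| ≤ |b0| + |b x - b0| := by
          have := abs_add_le (b x - b0) b0; simpa [sub_add_cancel, add_comm] using this
      _ ≤ b0 + Cb * ρ ^ α := by
          rw [abs_of_pos hb0]
          exact add_le_add (le_refl _) (le_trans h2 (mul_le_mul_of_nonneg_left hxα hCb0))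
  -- bound on F - bV
  set C₂ := C₁ + Bb * A' with hC₂
  have hC₂0 : 0 ≤ C₂ := by positivity
  have hFbV : ∀ y ∈ Ioc (0:ℝ) ρ, |F y - b y * V y| ≤ C₂ * y ^ α := by
    intro y hy
    have hid : F y - b y * V y = (F y - F 0 - (b y - b0) * c) - b y * (V y - c) := by
      linear_combination -hb0c
    rw [hid]
    calc |(F y - F 0 - (b y - b0) * c) - b y * (V y - c)|
        ≤ |F y - F 0 - (b y - b0) * c| + |b y * (V y - c)| := abs_sub _ _
      _ ≤ C₁ * y ^ α + Bb * (A' * y ^ α) := by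
          apply add_le_add (hH y hy)
          rw [abs_mul]
          apply mul_le_mul (hbabs y ⟨hy.1.le, hy.2⟩) (habs y hy) (abs_nonneg _) hBb0
      _ = C₂ * y ^ α := by rw [hC₂]; ring
  -- derivative bound
  have hdV : ∀ y ∈ Ioo (0:ℝ) ρ, |deriv V y| ≤ C₂ * y ^ (α - 1) := by
    intro y hy
    have h := hODE' y hy
    have h1 : |y * deriv V y| ≤ C₂ * y ^ α := by
      have : y * deriv V y = F y - b y * V y := by linarith
      rw [this]
      exact hFbV y (Ioo_subset_Ioc_self hy)
    rw [abs_mul, abs_of_pos hy.1] at h1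
    rw [Real.rpow_sub_one (ne_of_gt hy.1), ← mul_div_assoc, le_div_iff₀ hy.1]
    calc |deriv V y| * y = y * |deriv V y| := by ring
      _ ≤ C₂ * y ^ α := h1
  -- interior Hölder estimate for V
  have hVH : ∀ x ∈ Ioc (0:ℝ) ρ, ∀ x' ∈ Ioc (0:ℝ) ρ, x ≤ x' →
      |V x' - V x| ≤ (C₂ / α) * (x' - x) ^ α :=
    my_holder_step ha0 ha1.le hC₂0 V hVAt hVdiff.continuousOn hdV
  -- the extension
  set Vbar : ℝ → ℝ := fun y => if y ≤ 0 then c else V y with hVbar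
  have hVbeq : ∀ y ∈ Ioc (0:ℝ) ρ, Vbar y = V y := by
    intro y hy
    simp only [hVbar, if_neg (not_le.2 hy.1)]
  have hVb0 : Vbar 0 = c := by simp [hVbar]
  set CV := A' + C₂ / α with hCV
  have hCV0 : 0 ≤ CV := by positivity
  -- ordered Hölder estimate for Vbar
  have haux : ∀ x ∈ Icc (0:ℝ) ρ, ∀ x' ∈ Icc (0:ℝ) ρ, x ≤ x' →
      |Vbar x' - Vbar x| ≤ CV * (x' - x) ^ α := by
    intro x hx x' hx' hxx'
    by_cases hx0 : x ≤ 0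
    · have hxeq : x = 0 := le_antisymm hx0 hx.1
      have hVx : Vbar x = c := by rw [hxeq, hVb0]
      by_cases hx'0 : x' ≤ 0
      · have hx'eq : x' = 0 := le_antisymm hx'0 hx'.1
        rw [hxeq, hx'eq, hVb0]
        simp [Real.zero_rpow (ne_of_gt ha0)]
      · push_neg at hx'0
        rw [hVx, hVbeq x' ⟨hx'0, hx'.2⟩, hxeq, sub_zero]
        calc |V x' - c| ≤ A' * x' ^ α := habs x' ⟨hx'0, hx'.2⟩
          _ ≤ CV * x' ^ α := by
              apply mul_le_mul_of_nonneg_right _ (Real.rpow_nonneg hx'.1 α)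
              rw [hCV]
              have : 0 ≤ C₂ / α := by positivity
              linarith
    · push_neg at hx0
      have hx'0 : 0 < x' := lt_of_lt_of_le hx0 hxx'
      rw [hVbeq x ⟨hx0, hx.2⟩, hVbeq x' ⟨hx'0, hx'.2⟩]
      calc |V x' - V x| ≤ (C₂ / α) * (x' - x) ^ α :=
            hVH x ⟨hx0, hx.2⟩ x' ⟨hx'0, hx'.2⟩ hxx'
        _ ≤ CV * (x' - x) ^ α := by
            apply mul_le_mul_of_nonneg_right _ (Real.rpow_nonneg (by linarith) α)
            rw [hCV]; linarith
  have hVbarH : ∀ x ∈ Icc (0:ℝ) ρ, ∀ x' ∈ Icc (0:ℝ) ρ,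
      |Vbar x - Vbar x'| ≤ CV * |x - x'| ^ α := by
    intro x hx x' hx'
    rcases le_total x x' with h | h
    · rw [abs_sub_comm, abs_sub_comm x x', abs_of_nonneg (sub_nonneg.2 h)]
      exact haux x hx x' hx' h
    · rw [abs_of_nonneg (sub_nonneg.2 h)]
      exact haux x' hx' x hx h
  refine ⟨⟨Vbar, hVbeq, hVb0, CV, hCV0, hVbarH⟩, ?_⟩
  -- part (b)
  set G : ℝ → ℝ := fun y => F y - b y * Vbar y with hG
  have hGeq : ∀ y ∈ Ioc (0:ℝ) ρ, G y = y * derivWithin V (Ioc 0 ρ) y := by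
    intro y hy
    have h := hODE y hy
    simp only [hG, hVbeq y hy]
    linarith
  have hG0 : G 0 = 0 := by
    have h1 : G 0 = F 0 - b 0 * Vbar 0 := rfl
    rw [h1, hVb0, hb0eq]
    linarith [hb0c]
  -- bound for Vbar on [0, ρ]
  set BV := max M |c| with hBV
  have hBV0 : 0 ≤ BV := le_trans hM0 (le_max_left _ _)
  have hVbarbd : ∀ x ∈ Icc (0:ℝ) ρ, |Vbar x| ≤ BV := by
    intro x hx
    by_cases hx0 : x ≤ 0
    · have : x = 0 := le_antisymm hx0 hx.1
      rw [this, hVb0]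
      exact le_max_right _ _
    · push_neg at hx0
      rw [hVbeq x ⟨hx0, hx.2⟩]
      exact le_trans (hVbd x ⟨hx0, hx.2⟩) (le_max_left _ _)
  set CG := CF + Bb * CV + BV * Cb with hCG
  have hCG0 : 0 ≤ CG :=
    add_nonneg (add_nonneg hCF0 (mul_nonneg hBb0 hCV0)) (mul_nonneg hBV0 hCb0)
  refine ⟨G, hGeq, hG0, CG, hCG0, ?_⟩
  intro x hx x' hx'
  have hd0 : 0 ≤ |x - x'| ^ α := Real.rpow_nonneg (abs_nonneg _) α
  have hid : G x - G x' = (F x - F x') - (b x * (Vbar x - Vbar x') + (b x - b x') * Vbar x') := by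
    simp only [hG]; ring
  rw [hid]
  calc |(F x - F x') - (b x * (Vbar x - Vbar x') + (b x - b x') * Vbar x')|
      ≤ |F x - F x'| + (|b x * (Vbar x - Vbar x')| + |(b x - b x') * Vbar x'|) :=
        le_trans (abs_sub _ _) (by gcongr; exact abs_add_le _ _)
    _ ≤ CF * |x - x'| ^ α + (Bb * (CV * |x - x'| ^ α) + Cb * |x - x'| ^ α * BV) := by
        apply add_le_add (hCF x hx x' hx')
        apply add_le_add
        · rw [abs_mul]
          exact mul_le_mul (hbabs x hx) (hVbarH x hx x' hx') (abs_nonneg _) hBb0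
        · rw [abs_mul]
          exact mul_le_mul (hCb x hx x' hx') (hVbarbd x' hx') (abs_nonneg _) (by positivity)
    _ = CG * |x - x'| ^ α := by rw [hCG]; ring
end

section
/- Square-root substitution fact (i) of Section 5: let r0 > 0, σ ∈ (0,1), let I ⊂ ℝ be a compact interval, and let F : [0,r0] × I → ℝ be such that the partial derivative ∂_r F exists at every point of [0,r0] × I (one-sided at r = 0, r0), the map (r,t) ↦ ∂_r F(r,t) is σ-Hölder continuous on [0,r0] × I, ∂_r F(0,t) = 0 for every t ∈ I, and there is M ≥ 0 with |F(r,t) − F(r,t')| ≤ M|t − t'| for all r ∈ [0,r0], t,t' ∈ I. Then the function (y,t) ↦ F(2√y, t) is σ-Hölder continuous on [0, r0²/4] × I. -/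
open Set

theorem stmt_11
    (r0 σ t0 t1 : ℝ) (hr0 : 0 < r0) (hσ : σ ∈ Set.Ioo (0:ℝ) 1) (hI : t0 ≤ t1)
    (F Fr : ℝ → ℝ → ℝ)
    (hFr : ∀ r ∈ Set.Icc 0 r0, ∀ t ∈ Set.Icc t0 t1,
      HasDerivWithinAt (fun r' => F r' t) (Fr r t) (Set.Icc 0 r0) r)
    (hFrHolder : ∃ C : ℝ, 0 ≤ C ∧ ∀ r ∈ Set.Icc 0 r0, ∀ t ∈ Set.Icc t0 t1,
      ∀ r' ∈ Set.Icc 0 r0, ∀ t' ∈ Set.Icc t0 t1,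
      |Fr r t - Fr r' t'| ≤ C * (max |r - r'| |t - t'|) ^ σ)
    (hFr0 : ∀ t ∈ Set.Icc t0 t1, Fr 0 t = 0)
    (M : ℝ) (hM : 0 ≤ M)
    (hLip : ∀ r ∈ Set.Icc 0 r0, ∀ t ∈ Set.Icc t0 t1, ∀ t' ∈ Set.Icc t0 t1,
      |F r t - F r t'| ≤ M * |t - t'|) :
    ∃ C : ℝ, 0 ≤ C ∧ ∀ y ∈ Set.Icc 0 (r0 ^ 2 / 4), ∀ t ∈ Set.Icc t0 t1,
      ∀ y' ∈ Set.Icc 0 (r0 ^ 2 / 4), ∀ t' ∈ Set.Icc t0 t1,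
      |F (2 * Real.sqrt y) t - F (2 * Real.sqrt y') t'|
        ≤ C * (max |y - y'| |t - t'|) ^ σ := by
  obtain ⟨C, hC, hH⟩ := hFrHolder
  obtain ⟨hσ0, hσ1⟩ := hσ
  set Y : ℝ := r0 ^ 2 / 4 with hYdef
  have hY0 : 0 ≤ Y := by positivity
  have h1σ : 0 ≤ 1 - σ := by linarith
  have hsqrtY : Real.sqrt Y = r0 / 2 := by
    rw [show Y = (r0 / 2) ^ 2 by rw [hYdef]; ring]
    exact Real.sqrt_sq (by positivity)
  -- Mean value estimate in the r direction
  have L1 : ∀ r ∈ Icc (0:ℝ) r0, ∀ r' ∈ Icc (0:ℝ) r0, ∀ t ∈ Icc t0 t1,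
      |F r t - F r' t| ≤ (C * (max r r') ^ σ) * |r - r'| := by
    intro r hr r' hr' t ht
    have hsub : Icc (min r r') (max r r') ⊆ Icc (0:ℝ) r0 := fun x hx =>
      ⟨le_trans (le_min hr.1 hr'.1) hx.1, le_trans hx.2 (max_le hr.2 hr'.2)⟩
    have hderiv : ∀ x ∈ Icc (min r r') (max r r'),
        HasDerivWithinAt (fun r'' => F r'' t) (Fr x t) (Icc (min r r') (max r r')) x :=
      fun x hx => (hFr x (hsub hx) t ht).mono hsub
    have hbound : ∀ x ∈ Icc (min r r') (max r r'), ‖Fr x t‖ ≤ C * (max r r') ^ σ := by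
      intro x hx
      have hx0 := hsub hx
      have h := hH x hx0 t ht 0 ⟨le_refl 0, le_of_lt hr0⟩ t ht
      rw [hFr0 t ht, sub_zero, sub_zero, sub_self, abs_zero] at h
      have hxabs : max |x| 0 = x := by
        rw [abs_of_nonneg hx0.1, max_eq_left hx0.1]
      rw [hxabs] at h
      calc ‖Fr x t‖ = |Fr x t| := rfl
        _ ≤ C * x ^ σ := h
        _ ≤ C * (max r r') ^ σ := by
            have : x ^ σ ≤ (max r r') ^ σ :=
              Real.rpow_le_rpow hx0.1 hx.2 (le_of_lt hσ0)
            exact mul_le_mul_of_nonneg_left this hC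
    have := Convex.norm_image_sub_le_of_norm_hasDerivWithin_le hderiv hbound
      (convex_Icc _ _) (x := r') (y := r)
      ⟨min_le_right _ _, le_max_right _ _⟩ ⟨min_le_left _ _, le_max_left _ _⟩
    simpa using this
  -- Hölder estimate in the y direction after substitution
  have key : ∀ y ∈ Icc (0:ℝ) Y, ∀ y' ∈ Icc (0:ℝ) Y, ∀ t ∈ Icc t0 t1,
      |F (2 * Real.sqrt y) t - F (2 * Real.sqrt y') t|
        ≤ C * 2 ^ (1 + σ) * Y ^ ((1 - σ) / 2) * |y - y'| ^ σ := by
    intro y hy y' hy' t ht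
    set a := Real.sqrt y with hadef
    set b := Real.sqrt y' with hbdef
    have ha0 : 0 ≤ a := Real.sqrt_nonneg _
    have hb0 : 0 ≤ b := Real.sqrt_nonneg _
    have haY : a ≤ r0 / 2 := by rw [← hsqrtY]; exact Real.sqrt_le_sqrt hy.2
    have hbY : b ≤ r0 / 2 := by rw [← hsqrtY]; exact Real.sqrt_le_sqrt hy'.2
    have har : 2 * a ∈ Icc (0:ℝ) r0 := ⟨by positivity, by linarith⟩
    have hbr : 2 * b ∈ Icc (0:ℝ) r0 := ⟨by positivity, by linarith⟩
    set m := max a b with hmdef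
    set s := |a - b| with hsdef
    have hm0 : 0 ≤ m := le_trans ha0 (le_max_left _ _)
    have hs0 : 0 ≤ s := abs_nonneg _
    have hsm : s ≤ m := by
      rw [hsdef, abs_sub_le_iff]
      constructor
      · have := le_max_left a b; linarith
      · have := le_max_right a b; linarith
    have hmY : m ≤ Real.sqrt Y := by rw [hsqrtY]; exact max_le haY hbY
    have hya : y = a ^ 2 := (Real.sq_sqrt hy.1).symm
    have hyb : y' = b ^ 2 := (Real.sq_sqrt hy'.1).symm
    have hdiff : |y - y'| = (a + b) * s := by
      rw [hsdef, hya, hyb, show a ^ 2 - b ^ 2 = (a + b) * (a - b) by ring, abs_mul,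
        abs_of_nonneg (by linarith : (0:ℝ) ≤ a + b)]
    have hms : m * s ≤ |y - y'| := by
      rw [hdiff]
      apply mul_le_mul_of_nonneg_right _ hs0
      rcases max_cases a b with ⟨h1, _⟩ | ⟨h1, _⟩ <;> rw [hmdef, h1] <;> linarith
    have e5 : (Real.sqrt Y) ^ (1 - σ) = Y ^ ((1 - σ) / 2) := by
      rw [Real.sqrt_eq_rpow, ← Real.rpow_mul hY0,
        show 1 / 2 * (1 - σ) = (1 - σ) / 2 by ring]
    -- core rpow inequality
    have core : m ^ σ * s ≤ Y ^ ((1 - σ) / 2) * |y - y'| ^ σ := by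
      have e1 : s = s ^ σ * s ^ (1 - σ) := by
        rw [← Real.rpow_add' hs0 (by norm_num), show σ + (1 - σ) = 1 by ring,
          Real.rpow_one]
      have e2 : s ^ (1 - σ) ≤ m ^ (1 - σ) := Real.rpow_le_rpow hs0 hsm h1σ
      have e4 : m ^ (1 - σ) ≤ (Real.sqrt Y) ^ (1 - σ) :=
        Real.rpow_le_rpow hm0 hmY h1σ
      calc m ^ σ * s = m ^ σ * (s ^ σ * s ^ (1 - σ)) := by rw [← e1]
        _ ≤ m ^ σ * (s ^ σ * m ^ (1 - σ)) := by
            exact mul_le_mul_of_nonneg_left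
              (mul_le_mul_of_nonneg_left e2 (Real.rpow_nonneg hs0 _))
              (Real.rpow_nonneg hm0 _)
        _ = (m * s) ^ σ * m ^ (1 - σ) := by
            rw [Real.mul_rpow hm0 hs0]; ring
        _ ≤ |y - y'| ^ σ * Y ^ ((1 - σ) / 2) := by
            apply mul_le_mul (Real.rpow_le_rpow (by positivity) hms (le_of_lt hσ0))
              (e5 ▸ e4) (Real.rpow_nonneg hm0 _) (Real.rpow_nonneg (abs_nonneg _) _)
        _ = Y ^ ((1 - σ) / 2) * |y - y'| ^ σ := by ring
    have hmax : max (2 * a) (2 * b) = 2 * m := by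
      rcases le_total a b with h | h
      · rw [hmdef, max_eq_right h, max_eq_right (by linarith : 2 * a ≤ 2 * b)]
      · rw [hmdef, max_eq_left h, max_eq_left (by linarith : 2 * b ≤ 2 * a)]
    have habs : |2 * a - 2 * b| = 2 * s := by
      rw [hsdef, show 2 * a - 2 * b = 2 * (a - b) by ring, abs_mul, abs_two]
    have h2m : (2 * m) ^ σ = 2 ^ σ * m ^ σ :=
      Real.mul_rpow (by norm_num) hm0
    have h2σ : (2:ℝ) ^ (1 + σ) = 2 * 2 ^ σ := by
      rw [Real.rpow_add (by norm_num : (0:ℝ) < 2), Real.rpow_one]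
    calc |F (2 * a) t - F (2 * b) t|
        ≤ (C * (max (2 * a) (2 * b)) ^ σ) * |2 * a - 2 * b| := L1 _ har _ hbr t ht
      _ = C * 2 ^ (1 + σ) * (m ^ σ * s) := by
          rw [hmax, habs, h2m, h2σ]; ring
      _ ≤ C * 2 ^ (1 + σ) * (Y ^ ((1 - σ) / 2) * |y - y'| ^ σ) := by
          apply mul_le_mul_of_nonneg_left core
          have : (0:ℝ) ≤ 2 ^ (1 + σ) := Real.rpow_nonneg (by norm_num) _
          positivity
      _ = C * 2 ^ (1 + σ) * Y ^ ((1 - σ) / 2) * |y - y'| ^ σ := by ring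
  -- assemble
  have h2σnn : (0:ℝ) ≤ 2 ^ (1 + σ) := Real.rpow_nonneg (by norm_num) _
  have hT : (0:ℝ) ≤ t1 - t0 := sub_nonneg.2 hI
  refine ⟨C * 2 ^ (1 + σ) * Y ^ ((1 - σ) / 2) + M * (t1 - t0) ^ (1 - σ), ?_, ?_⟩
  · have hYp : (0:ℝ) ≤ Y ^ ((1 - σ) / 2) := Real.rpow_nonneg hY0 _
    have hTp : (0:ℝ) ≤ (t1 - t0) ^ (1 - σ) := Real.rpow_nonneg hT _
    positivity
  intro y hy t ht y' hy' t' ht'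
  set D := max |y - y'| |t - t'| with hDdef
  have hD0 : 0 ≤ D := le_trans (abs_nonneg _) (le_max_left _ _)
  have hDσ : (0:ℝ) ≤ D ^ σ := Real.rpow_nonneg hD0 _
  have h1 : |F (2 * Real.sqrt y) t - F (2 * Real.sqrt y') t|
      ≤ C * 2 ^ (1 + σ) * Y ^ ((1 - σ) / 2) * D ^ σ := by
    refine le_trans (key y hy y' hy' t ht) ?_
    apply mul_le_mul_of_nonneg_left
      (Real.rpow_le_rpow (abs_nonneg _) (le_max_left _ _) (le_of_lt hσ0))
    have hYp : (0:ℝ) ≤ Y ^ ((1 - σ) / 2) := Real.rpow_nonneg hY0 _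
    positivity
  have h2 : |F (2 * Real.sqrt y') t - F (2 * Real.sqrt y') t'|
      ≤ M * (t1 - t0) ^ (1 - σ) * D ^ σ := by
    have hbr : 2 * Real.sqrt y' ∈ Icc (0:ℝ) r0 := by
      constructor
      · positivity
      · have : Real.sqrt y' ≤ r0 / 2 := by
          rw [← hsqrtY]; exact Real.sqrt_le_sqrt hy'.2
        linarith
    refine le_trans (hLip _ hbr t ht t' ht') ?_
    have htt : |t - t'| ≤ t1 - t0 := by
      rw [abs_sub_le_iff]; constructor <;> [linarith [ht.2, ht'.1]; linarith [ht'.2, ht.1]]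
    have e1 : |t - t'| = |t - t'| ^ σ * |t - t'| ^ (1 - σ) := by
      rw [← Real.rpow_add' (abs_nonneg _) (by norm_num), show σ + (1 - σ) = 1 by ring,
        Real.rpow_one]
    calc M * |t - t'| = M * (|t - t'| ^ σ * |t - t'| ^ (1 - σ)) := by rw [← e1]
      _ ≤ M * (D ^ σ * (t1 - t0) ^ (1 - σ)) := by
          apply mul_le_mul_of_nonneg_left _ hM
          exact mul_le_mul (Real.rpow_le_rpow (abs_nonneg _) (le_max_right _ _) (le_of_lt hσ0))
            (Real.rpow_le_rpow (abs_nonneg _) htt h1σ)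
            (Real.rpow_nonneg (abs_nonneg _) _) hDσ
      _ = M * (t1 - t0) ^ (1 - σ) * D ^ σ := by ring
  calc |F (2 * Real.sqrt y) t - F (2 * Real.sqrt y') t'|
      ≤ |F (2 * Real.sqrt y) t - F (2 * Real.sqrt y') t|
        + |F (2 * Real.sqrt y') t - F (2 * Real.sqrt y') t'| := abs_sub_le _ _ _
    _ ≤ C * 2 ^ (1 + σ) * Y ^ ((1 - σ) / 2) * D ^ σ
        + M * (t1 - t0) ^ (1 - σ) * D ^ σ := add_le_add h1 h2
    _ = (C * 2 ^ (1 + σ) * Y ^ ((1 - σ) / 2) + M * (t1 - t0) ^ (1 - σ)) * D ^ σ := by ring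
end

section
/- Square-root substitution fact (ii) of Section 5: let r0 > 0, σ ∈ (0,1), let I ⊂ ℝ be a compact interval, and let f : [0,r0] × I → ℝ be σ-Hölder continuous on [0,r0] × I with f(0,t) = 0 for every t ∈ I. Then the function (y,t) ↦ √y · f(2√y, t) is σ-Hölder continuous on [0, r0²/4] × I. -/
open Set

theorem stmt_12
    (r0 σ t0 t1 : ℝ) (hr0 : 0 < r0) (hσ : σ ∈ Set.Ioo (0:ℝ) 1) (hI : t0 ≤ t1)
    (f : ℝ → ℝ → ℝ)
    (hf : ∃ C : ℝ, 0 ≤ C ∧ ∀ r ∈ Set.Icc 0 r0, ∀ t ∈ Set.Icc t0 t1,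
      ∀ r' ∈ Set.Icc 0 r0, ∀ t' ∈ Set.Icc t0 t1,
      |f r t - f r' t'| ≤ C * (max |r - r'| |t - t'|) ^ σ)
    (hf0 : ∀ t ∈ Set.Icc t0 t1, f 0 t = 0) :
    ∃ C : ℝ, 0 ≤ C ∧ ∀ y ∈ Set.Icc 0 (r0 ^ 2 / 4), ∀ t ∈ Set.Icc t0 t1,
      ∀ y' ∈ Set.Icc 0 (r0 ^ 2 / 4), ∀ t' ∈ Set.Icc t0 t1,
      |Real.sqrt y * f (2 * Real.sqrt y) t - Real.sqrt y' * f (2 * Real.sqrt y') t'|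
        ≤ C * (max |y - y'| |t - t'|) ^ σ := by
  obtain ⟨C, hC0, hf⟩ := hf
  obtain ⟨hσ0, hσ1⟩ := hσ
  refine ⟨C * (5 + 5 * r0), mul_nonneg hC0 (by linarith), ?_⟩
  -- helper: x^(1-σ) ≤ 1 + r0 for 0 ≤ x ≤ r0/2
  have hpow : ∀ x : ℝ, 0 ≤ x → x ≤ r0 / 2 → x ^ (1 - σ) ≤ 1 + r0 := by
    intro x hx hxr
    rcases le_total x 1 with hx1 | hx1
    · have := Real.rpow_le_one hx hx1 (by linarith : (0:ℝ) ≤ 1 - σ)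
      linarith
    · have h := Real.rpow_le_rpow_of_exponent_le hx1 (by linarith : 1 - σ ≤ 1)
      rw [Real.rpow_one] at h
      linarith
  have key : ∀ y ∈ Set.Icc (0:ℝ) (r0 ^ 2 / 4), ∀ t ∈ Set.Icc t0 t1,
      ∀ y' ∈ Set.Icc (0:ℝ) (r0 ^ 2 / 4), ∀ t' ∈ Set.Icc t0 t1, y' ≤ y →
      |Real.sqrt y * f (2 * Real.sqrt y) t - Real.sqrt y' * f (2 * Real.sqrt y') t'|
        ≤ C * (5 + 5 * r0) * (max |y - y'| |t - t'|) ^ σ := by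
    intro y hy t ht y' hy' t' ht' hle
    set s := Real.sqrt y with hs_def
    set s' := Real.sqrt y' with hs'_def
    have hs0 : 0 ≤ s := Real.sqrt_nonneg _
    have hs'0 : 0 ≤ s' := Real.sqrt_nonneg _
    have hss' : s' ≤ s := Real.sqrt_le_sqrt hle
    have hsy : s ^ 2 = y := Real.sq_sqrt hy.1
    have hs'y : s' ^ 2 = y' := Real.sq_sqrt hy'.1
    have hsr : s ≤ r0 / 2 := by
      have h1 : Real.sqrt y ≤ Real.sqrt (r0 ^ 2 / 4) := Real.sqrt_le_sqrt hy.2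
      have h4 : r0 ^ 2 / 4 = (r0 / 2) ^ 2 := by ring
      rwa [h4, Real.sqrt_sq (by linarith)] at h1
    have hs'r : s' ≤ r0 / 2 := le_trans hss' hsr
    have h2s : 2 * s ∈ Set.Icc (0:ℝ) r0 := ⟨by linarith, by linarith⟩
    have h2s' : 2 * s' ∈ Set.Icc (0:ℝ) r0 := ⟨by linarith, by linarith⟩
    have h0r : (0:ℝ) ∈ Set.Icc (0:ℝ) r0 := ⟨le_refl _, hr0.le⟩
    have hyy' : (s - s') * (s + s') = y - y' := by nlinarith
    set Δ := max |y - y'| |t - t'| with hΔ_def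
    have hΔ0 : (0:ℝ) ≤ Δ := le_trans (abs_nonneg _) (le_max_left _ _)
    have hyyΔ : y - y' ≤ Δ := by
      have : |y - y'| ≤ Δ := le_max_left _ _
      rw [abs_of_nonneg (by linarith)] at this
      exact this
    have httΔ : |t - t'| ≤ Δ := le_max_right _ _
    have hyyσ : (y - y') ^ σ ≤ Δ ^ σ := Real.rpow_le_rpow (by linarith) hyyΔ hσ0.le
    have httσ : |t - t'| ^ σ ≤ Δ ^ σ := Real.rpow_le_rpow (abs_nonneg _) httΔ hσ0.le
    have hE0 : (0:ℝ) ≤ Δ ^ σ := Real.rpow_nonneg hΔ0 _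
    -- u * v^σ ≤ (1+r0) * Δ^σ  whenever  0≤u≤s, 0≤v, u*v ≤ y - y'
    have key_mul : ∀ u v : ℝ, 0 ≤ u → 0 ≤ v → u ≤ s → u * v ≤ y - y' →
        u * v ^ σ ≤ (1 + r0) * Δ ^ σ := by
      intro u v hu hv hus huv
      have hu1 : u ^ (1 - σ) * u ^ σ = u := by
        rw [← Real.rpow_add' hu (by norm_num : (1 - σ) + σ ≠ 0)]
        have he : (1 - σ) + σ = (1:ℝ) := by ring
        rw [he, Real.rpow_one]
      have h1 : u * v ^ σ = u ^ (1 - σ) * (u * v) ^ σ :=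
        calc u * v ^ σ = (u ^ (1 - σ) * u ^ σ) * v ^ σ := by rw [hu1]
          _ = u ^ (1 - σ) * (u ^ σ * v ^ σ) := by ring
          _ = u ^ (1 - σ) * (u * v) ^ σ := by rw [Real.mul_rpow hu hv]
      rw [h1]
      have h2 : u ^ (1 - σ) ≤ 1 + r0 := hpow u hu (le_trans hus hsr)
      have h3 : (u * v) ^ σ ≤ Δ ^ σ :=
        le_trans (Real.rpow_le_rpow (mul_nonneg hu hv) huv hσ0.le) hyyσ
      exact mul_le_mul h2 h3 (Real.rpow_nonneg (mul_nonneg hu hv) _)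
        (by linarith)
    have P1 : (s - s') * s' ^ σ ≤ (1 + r0) * Δ ^ σ :=
      key_mul (s - s') s' (by linarith) hs'0 (by linarith)
        (by nlinarith)
    have P2 : s * (s - s') ^ σ ≤ (1 + r0) * Δ ^ σ :=
      key_mul s (s - s') hs0 (by linarith) le_rfl (by nlinarith)
    have P3 : s * |t - t'| ^ σ ≤ (r0 / 2) * Δ ^ σ := by
      have h1 : (0:ℝ) ≤ |t - t'| ^ σ := Real.rpow_nonneg (abs_nonneg _) _
      nlinarith
    have h2σ : (2:ℝ) ^ σ ≤ 2 := by
      have := Real.rpow_le_rpow_of_exponent_le (one_le_two) hσ1.le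
      rwa [Real.rpow_one] at this
    have h2σ0 : (0:ℝ) ≤ (2:ℝ) ^ σ := Real.rpow_nonneg (by norm_num) _
    -- bound on f(2s',t')
    have hfb : |f (2 * s') t'| ≤ C * (2 ^ σ * s' ^ σ) := by
      have h := hf (2 * s') h2s' t' ht' 0 h0r t' ht'
      rw [hf0 t' ht', sub_zero, sub_zero, sub_self, abs_zero,
        abs_of_nonneg (by linarith : (0:ℝ) ≤ 2 * s'),
        max_eq_left (by linarith : (0:ℝ) ≤ 2 * s')] at h
      rwa [← Real.mul_rpow (by norm_num) hs'0]
    -- bound on the difference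
    have hfd : |f (2 * s) t - f (2 * s') t'| ≤
        C * (2 ^ σ * (s - s') ^ σ + |t - t'| ^ σ) := by
      have h := hf (2 * s) h2s t ht (2 * s') h2s' t' ht'
      have h1 : |2 * s - 2 * s'| = 2 * (s - s') := by
        rw [abs_of_nonneg (by linarith)]; ring
      rw [h1] at h
      refine le_trans h ?_
      have hmax : (max (2 * (s - s')) |t - t'|) ^ σ ≤
          2 ^ σ * (s - s') ^ σ + |t - t'| ^ σ := by
        have ha : (2 * (s - s')) ^ σ = 2 ^ σ * (s - s') ^ σ :=
          Real.mul_rpow (by norm_num) (by linarith)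
        have hta : (0:ℝ) ≤ |t - t'| ^ σ := Real.rpow_nonneg (abs_nonneg _) _
        have hsa : (0:ℝ) ≤ (2 * (s - s')) ^ σ := Real.rpow_nonneg (by linarith) _
        rcases max_cases (2 * (s - s')) |t - t'| with ⟨he, _⟩ | ⟨he, _⟩
        · rw [he, ha]; linarith [ha ▸ hsa]
        · rw [he]; linarith [ha ▸ hsa]
      exact mul_le_mul_of_nonneg_left hmax hC0
    -- assemble
    have hsplit : Real.sqrt y * f (2 * Real.sqrt y) t - Real.sqrt y' * f (2 * Real.sqrt y') t'
        = s * (f (2 * s) t - f (2 * s') t') + (s - s') * f (2 * s') t' := by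
      rw [← hs_def, ← hs'_def]; ring
    rw [hsplit]
    calc |s * (f (2 * s) t - f (2 * s') t') + (s - s') * f (2 * s') t'|
        ≤ |s * (f (2 * s) t - f (2 * s') t')| + |(s - s') * f (2 * s') t'| :=
          abs_add_le _ _
      _ = s * |f (2 * s) t - f (2 * s') t'| + (s - s') * |f (2 * s') t'| := by
          rw [abs_mul, abs_mul, abs_of_nonneg hs0, abs_of_nonneg (by linarith : (0:ℝ) ≤ s - s')]
      _ ≤ s * (C * (2 ^ σ * (s - s') ^ σ + |t - t'| ^ σ))
            + (s - s') * (C * (2 ^ σ * s' ^ σ)) :=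
          add_le_add (mul_le_mul_of_nonneg_left hfd hs0)
            (mul_le_mul_of_nonneg_left hfb (by linarith))
      _ = C * (2 ^ σ * (s * (s - s') ^ σ) + s * |t - t'| ^ σ
            + 2 ^ σ * ((s - s') * s' ^ σ)) := by ring
      _ ≤ C * ((5 + 5 * r0) * Δ ^ σ) := by
          have hA : (0:ℝ) ≤ s * (s - s') ^ σ :=
            mul_nonneg hs0 (Real.rpow_nonneg (by linarith) _)
          have hB : (0:ℝ) ≤ (s - s') * s' ^ σ :=
            mul_nonneg (by linarith) (Real.rpow_nonneg hs'0 _)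
          have u1 : 2 ^ σ * (s * (s - s') ^ σ) ≤ 2 * (s * (s - s') ^ σ) :=
            mul_le_mul_of_nonneg_right h2σ hA
          have u2 : 2 ^ σ * ((s - s') * s' ^ σ) ≤ 2 * ((s - s') * s' ^ σ) :=
            mul_le_mul_of_nonneg_right h2σ hB
          refine mul_le_mul_of_nonneg_left ?_ hC0
          linarith [mul_nonneg hr0.le hE0]
      _ = C * (5 + 5 * r0) * Δ ^ σ := by ring
  intro y hy t ht y' hy' t' ht'
  rcases le_total y' y with h | h
  · exact key y hy t ht y' hy' t' ht' h
  · have h2 := key y' hy' t' ht' y hy t ht h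
    rwa [abs_sub_comm, abs_sub_comm y' y, abs_sub_comm t' t] at h2
end

section
/- Square-root substitution fact (iii) of Section 5: let r0 > 0, σ ∈ (0,1), let I ⊂ ℝ be a compact interval, and let f : [0,r0] × I → ℝ be σ-Hölder continuous on [0,r0] × I. Then the function (y,t) ↦ y · f(2√y, t) is σ-Hölder continuous on [0, r0²/4] × I. -/
open Set

private lemma key_sqrt (σ Y : ℝ) (hσ0 : 0 ≤ σ) (hσ1 : σ ≤ 1) (hY : 0 ≤ Y)
    (y y' : ℝ) (hy0 : 0 ≤ y) (hy'0 : 0 ≤ y') (hy'Y : y' ≤ Y) :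
    y' * |Real.sqrt y - Real.sqrt y'| ^ σ ≤ (Y + 1) * |y - y'| ^ σ := by
  rcases eq_or_lt_of_le hy'0 with h0 | h0
  · rw [← h0]
    simp only [zero_mul]
    positivity
  · have hs : 0 < Real.sqrt y' := Real.sqrt_pos.2 h0
    have h1 : |Real.sqrt y - Real.sqrt y'| * Real.sqrt y' ≤ |y - y'| := by
      have heq : |Real.sqrt y - Real.sqrt y'| * (Real.sqrt y + Real.sqrt y') = |y - y'| := by
        rw [← abs_of_nonneg (by positivity : (0:ℝ) ≤ Real.sqrt y + Real.sqrt y'), ← abs_mul]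
        congr 1
        have h2 := Real.sq_sqrt hy0
        have h3 := Real.sq_sqrt (le_of_lt h0)
        nlinarith [Real.sqrt_nonneg y, Real.sqrt_nonneg y']
      nlinarith [abs_nonneg (Real.sqrt y - Real.sqrt y'), Real.sqrt_nonneg y]
    have h2 : |Real.sqrt y - Real.sqrt y'| ≤ |y - y'| / Real.sqrt y' :=
      (le_div_iff₀ hs).2 h1
    have h3 : |Real.sqrt y - Real.sqrt y'| ^ σ ≤ (|y - y'| / Real.sqrt y') ^ σ :=
      Real.rpow_le_rpow (abs_nonneg _) h2 hσ0
    have h4 : (|y - y'| / Real.sqrt y') ^ σ = |y - y'| ^ σ / (y') ^ (σ/2) := by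
      rw [Real.div_rpow (abs_nonneg _) (Real.sqrt_nonneg _)]
      congr 1
      rw [Real.sqrt_eq_rpow, ← Real.rpow_mul (le_of_lt h0)]
      ring_nf
    have h5 : y' / (y') ^ (σ/2) = (y') ^ (1 - σ/2) := by
      rw [Real.rpow_sub h0, Real.rpow_one]
    have h6 : (y') ^ (1 - σ/2) ≤ Y + 1 := by
      rcases le_or_gt y' 1 with h | h
      · calc (y') ^ (1 - σ/2) ≤ 1 := Real.rpow_le_one (le_of_lt h0) h (by linarith)
          _ ≤ Y + 1 := by linarith
      · calc (y') ^ (1 - σ/2) ≤ (y') ^ (1:ℝ) :=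
            Real.rpow_le_rpow_of_exponent_le (le_of_lt h) (by linarith)
          _ = y' := Real.rpow_one _
          _ ≤ Y + 1 := by linarith
    calc y' * |Real.sqrt y - Real.sqrt y'| ^ σ
        ≤ y' * (|y - y'| ^ σ / (y') ^ (σ/2)) := by
          rw [h4] at h3
          exact mul_le_mul_of_nonneg_left h3 (le_of_lt h0)
      _ = (y') ^ (1 - σ/2) * |y - y'| ^ σ := by
          rw [← h5]; ring
      _ ≤ (Y + 1) * |y - y'| ^ σ :=
          mul_le_mul_of_nonneg_right h6 (Real.rpow_nonneg (abs_nonneg _) _)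

theorem stmt_13
    (r0 σ t0 t1 : ℝ) (hr0 : 0 < r0) (hσ : σ ∈ Set.Ioo (0:ℝ) 1) (hI : t0 ≤ t1)
    (f : ℝ → ℝ → ℝ)
    (hf : ∃ C : ℝ, 0 ≤ C ∧ ∀ r ∈ Set.Icc 0 r0, ∀ t ∈ Set.Icc t0 t1,
      ∀ r' ∈ Set.Icc 0 r0, ∀ t' ∈ Set.Icc t0 t1,
      |f r t - f r' t'| ≤ C * (max |r - r'| |t - t'|) ^ σ) :
    ∃ C : ℝ, 0 ≤ C ∧ ∀ y ∈ Set.Icc 0 (r0 ^ 2 / 4), ∀ t ∈ Set.Icc t0 t1,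
      ∀ y' ∈ Set.Icc 0 (r0 ^ 2 / 4), ∀ t' ∈ Set.Icc t0 t1,
      |y * f (2 * Real.sqrt y) t - y' * f (2 * Real.sqrt y') t'|
        ≤ C * (max |y - y'| |t - t'|) ^ σ := by
  obtain ⟨hσ0, hσ1⟩ := hσ
  obtain ⟨C, hC0, hC⟩ := hf
  set Y : ℝ := r0 ^ 2 / 4 with hYdef
  have hY : 0 < Y := by positivity
  set M : ℝ := |f 0 t0| + C * (max r0 (t1 - t0)) ^ σ with hMdef
  have hDnn : 0 ≤ max r0 (t1 - t0) := le_trans (le_of_lt hr0) (le_max_left _ _)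
  have hM0 : 0 ≤ M := by
    have : 0 ≤ C * (max r0 (t1 - t0)) ^ σ :=
      mul_nonneg hC0 (Real.rpow_nonneg hDnn _)
    have := abs_nonneg (f 0 t0); linarith
  have hM : ∀ r ∈ Set.Icc 0 r0, ∀ t ∈ Set.Icc t0 t1, |f r t| ≤ M := by
    intro r hr t ht
    have h1 := hC r hr t ht 0 ⟨le_refl 0, le_of_lt hr0⟩ t0 ⟨le_refl t0, hI⟩
    have h2 : max |r - 0| |t - t0| ≤ max r0 (t1 - t0) := by
      apply max_le_max
      · rw [sub_zero, abs_of_nonneg hr.1]; exact hr.2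
      · rw [abs_of_nonneg (by linarith [ht.1])]; linarith [ht.2]
    have h3 : (max |r - 0| |t - t0|) ^ σ ≤ (max r0 (t1 - t0)) ^ σ :=
      Real.rpow_le_rpow (le_trans (abs_nonneg _) (le_max_left _ _)) h2 (le_of_lt hσ0)
    have h4 : |f r t| - |f 0 t0| ≤ |f r t - f 0 t0| := abs_sub_abs_le_abs_sub _ _
    have h5 : C * (max |r - 0| |t - t0|) ^ σ ≤ C * (max r0 (t1 - t0)) ^ σ :=
      mul_le_mul_of_nonneg_left h3 hC0
    rw [hMdef]; linarith
  refine ⟨M * Y ^ (1 - σ) + C * (3 * Y + 2), ?_, ?_⟩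
  · have : (0:ℝ) ≤ Y ^ (1 - σ) := Real.rpow_nonneg (le_of_lt hY) _
    nlinarith [hY.le]
  intro y hy t ht y' hy' t' ht'
  have hmem : ∀ z : ℝ, z ∈ Set.Icc 0 Y → 2 * Real.sqrt z ∈ Set.Icc 0 r0 := by
    intro z hz
    constructor
    · positivity
    · have : Real.sqrt z ≤ Real.sqrt Y := Real.sqrt_le_sqrt hz.2
      have hYs : Real.sqrt Y = r0 / 2 := by
        rw [hYdef, show r0 ^ 2 / 4 = (r0 / 2) ^ 2 by ring, Real.sqrt_sq (by linarith)]
      linarith [this, hYs ▸ this]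
  set A := 2 * Real.sqrt y with hA
  set B := 2 * Real.sqrt y' with hB
  set d : ℝ := max |y - y'| |t - t'| with hd
  have hd0 : (0:ℝ) ≤ d := le_trans (abs_nonneg _) (le_max_left _ _)
  have hdy : |y - y'| ^ σ ≤ d ^ σ :=
    Real.rpow_le_rpow (abs_nonneg _) (le_max_left _ _) (le_of_lt hσ0)
  have hdt : |t - t'| ^ σ ≤ d ^ σ :=
    Real.rpow_le_rpow (abs_nonneg _) (le_max_right _ _) (le_of_lt hσ0)
  have hdσ0 : (0:ℝ) ≤ d ^ σ := Real.rpow_nonneg hd0 _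
  -- Step A : splitting
  have stepA : |y * f A t - y' * f B t'| ≤ |y - y'| * |f A t| + y' * |f A t - f B t'| := by
    have : y * f A t - y' * f B t' = (y - y') * f A t + y' * (f A t - f B t') := by ring
    rw [this]
    calc |(y - y') * f A t + y' * (f A t - f B t')|
        ≤ |(y - y') * f A t| + |y' * (f A t - f B t')| := abs_add_le _ _
      _ = |y - y'| * |f A t| + y' * |f A t - f B t'| := by
          rw [abs_mul, abs_mul, abs_of_nonneg hy'.1]
  -- Step B : first term
  have hyy' : |y - y'| ≤ Y := by
    rw [abs_sub_le_iff]; constructor <;> linarith [hy.1, hy.2, hy'.1, hy'.2]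
  have stepB : |y - y'| * |f A t| ≤ M * Y ^ (1 - σ) * d ^ σ := by
    have h1 : |y - y'| ≤ Y ^ (1 - σ) * d ^ σ := by
      have he : |y - y'| = |y - y'| ^ (1 - σ) * |y - y'| ^ σ := by
        rw [← Real.rpow_add' (abs_nonneg _) (by norm_num : (1 - σ) + σ ≠ 0)]
        norm_num
      rw [he]
      exact mul_le_mul (Real.rpow_le_rpow (abs_nonneg _) hyy' (by linarith))
        hdy (Real.rpow_nonneg (abs_nonneg _) _) (Real.rpow_nonneg (le_of_lt hY) _)
    have h2 := hM A (hmem y hy) t ht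
    calc |y - y'| * |f A t| ≤ (Y ^ (1 - σ) * d ^ σ) * M := by
          apply mul_le_mul h1 h2 (abs_nonneg _)
          positivity
      _ = M * Y ^ (1 - σ) * d ^ σ := by ring
  -- Step C : second term
  have stepC : y' * |f A t - f B t'| ≤ C * (3 * Y + 2) * d ^ σ := by
    have h1 := hC A (hmem y hy) t ht B (hmem y' hy') t' ht'
    have hAB : |A - B| = 2 * |Real.sqrt y - Real.sqrt y'| := by
      rw [hA, hB, show 2 * Real.sqrt y - 2 * Real.sqrt y' = 2 * (Real.sqrt y - Real.sqrt y') by ring,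
        abs_mul, abs_of_nonneg (by norm_num : (0:ℝ) ≤ 2)]
    have hmaxσ : (max |A - B| |t - t'|) ^ σ ≤ |A - B| ^ σ + |t - t'| ^ σ := by
      rcases max_cases |A - B| |t - t'| with ⟨h, _⟩ | ⟨h, _⟩ <;> rw [h]
      · linarith [Real.rpow_nonneg (abs_nonneg (t - t')) σ]
      · linarith [Real.rpow_nonneg (abs_nonneg (A - B)) σ]
    have hABσ : |A - B| ^ σ ≤ 2 * |Real.sqrt y - Real.sqrt y'| ^ σ := by
      rw [hAB, Real.mul_rpow (by norm_num) (abs_nonneg _)]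
      have h2σ : (2:ℝ) ^ σ ≤ 2 := by
        calc (2:ℝ) ^ σ ≤ (2:ℝ) ^ (1:ℝ) :=
              Real.rpow_le_rpow_of_exponent_le (by norm_num) (le_of_lt hσ1)
          _ = 2 := Real.rpow_one 2
      exact mul_le_mul_of_nonneg_right h2σ (Real.rpow_nonneg (abs_nonneg _) _)
    have hkey : y' * |Real.sqrt y - Real.sqrt y'| ^ σ ≤ (Y + 1) * |y - y'| ^ σ :=
      key_sqrt σ Y (le_of_lt hσ0) (le_of_lt hσ1) (le_of_lt hY) y y' hy.1 hy'.1 hy'.2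
    have ht'σ : y' * |t - t'| ^ σ ≤ Y * d ^ σ :=
      mul_le_mul hy'.2 hdt (Real.rpow_nonneg (abs_nonneg _) _) (le_of_lt hY)
    have hkey2 : y' * |Real.sqrt y - Real.sqrt y'| ^ σ ≤ (Y + 1) * d ^ σ := by
      refine le_trans hkey (mul_le_mul_of_nonneg_left hdy (by linarith))
    calc y' * |f A t - f B t'|
        ≤ y' * (C * (max |A - B| |t - t'|) ^ σ) :=
          mul_le_mul_of_nonneg_left h1 hy'.1
      _ = C * (y' * (max |A - B| |t - t'|) ^ σ) := by ring
      _ ≤ C * (y' * (|A - B| ^ σ + |t - t'| ^ σ)) := by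
          apply mul_le_mul_of_nonneg_left _ hC0
          exact mul_le_mul_of_nonneg_left hmaxσ hy'.1
      _ = C * (y' * |A - B| ^ σ + y' * |t - t'| ^ σ) := by ring
      _ ≤ C * (2 * ((Y + 1) * d ^ σ) + Y * d ^ σ) := by
          apply mul_le_mul_of_nonneg_left _ hC0
          have : y' * |A - B| ^ σ ≤ 2 * ((Y + 1) * d ^ σ) := by
            calc y' * |A - B| ^ σ ≤ y' * (2 * |Real.sqrt y - Real.sqrt y'| ^ σ) :=
                  mul_le_mul_of_nonneg_left hABσ hy'.1
              _ = 2 * (y' * |Real.sqrt y - Real.sqrt y'| ^ σ) := by ring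
              _ ≤ 2 * ((Y + 1) * d ^ σ) := by linarith [hkey2]
          linarith [ht'σ]
      _ = C * (3 * Y + 2) * d ^ σ := by ring
  calc |y * f A t - y' * f B t'|
      ≤ |y - y'| * |f A t| + y' * |f A t - f B t'| := stepA
    _ ≤ M * Y ^ (1 - σ) * d ^ σ + C * (3 * Y + 2) * d ^ σ := add_le_add stepB stepC
    _ = (M * Y ^ (1 - σ) + C * (3 * Y + 2)) * d ^ σ := by ring
end

section
/- Averaged acceleration identity (from the proof of Theorem 1.1): let θ > 0, c_θ := θ/(θ+1), b > 0, let I ⊂ ℝ be an open interval, and let p0 : [0,b] → ℝ be continuously differentiable with p0(0) = 0. Let γ : (0,b) × I → ℝ be twice continuously differentiable with ∂_y γ > 0, set Z := (∂_y γ)^{−(θ+1)}, and fix 0 < ρ < b. Assume: Z is continuously differentiable and bounded on (0,ρ] × I; for every compact J ⊂ I the functions ∂_t γ and ∂_{tt} γ are bounded on (0,ρ] × J; y ↦ γ(y,t) is integrable on (0,ρ) for each t; and the equation ∂_{tt} γ(y,t) = p0'(y)·Z(y,t) + c_θ·p0(y)·∂_y Z(y,t) holds on (0,b) × I. Then G_ρ(t)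 := ρ⁻¹·∫₀^ρ γ(y,t) dy is twice differentiable on I, and for every t ∈ I: G_ρ''(t) = (1 − c_θ)·ρ⁻¹·∫₀^ρ p0'(y)·Z(y,t) dy + c_θ·(p0(ρ)/ρ)·Z(ρ,t). -/
open Set MeasureTheory

/-- Partial derivative in the first (Lagrangian space) variable. -/
noncomputable def dy (f : ℝ → ℝ → ℝ) (y t : ℝ) : ℝ := deriv (fun y' => f y' t) y

/-- Partial derivative in the second (time) variable. -/
noncomputable def dt (f : ℝ → ℝ → ℝ) (y t : ℝ) : ℝ := deriv (fun t' => f y t') t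

/-- `Z := (∂_y γ)^{-(θ+1)}`. -/
noncomputable def Zfun (θ : ℝ) (γ : ℝ → ℝ → ℝ) (y t : ℝ) : ℝ :=
  (dy γ y t) ^ (-(θ + 1))

theorem stmt_14
    (θ b ρ t0 t1 : ℝ) (hθ : 0 < θ) (hb : 0 < b) (hI : t0 < t1)
    (hρ : 0 < ρ) (hρb : ρ < b)
    (p0 : ℝ → ℝ) (hp0 : ContDiffOn ℝ 1 p0 (Set.Icc 0 b)) (hp00 : p0 0 = 0)
    (γ : ℝ → ℝ → ℝ)
    (hγ : ContDiffOn ℝ 2 (fun p : ℝ × ℝ => γ p.1 p.2)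
      (Set.Ioo 0 b ×ˢ Set.Ioo t0 t1))
    (hpos : ∀ y ∈ Set.Ioo 0 b, ∀ t ∈ Set.Ioo t0 t1, 0 < dy γ y t)
    (hZC1 : ContDiffOn ℝ 1 (fun p : ℝ × ℝ => Zfun θ γ p.1 p.2)
      (Set.Ioc 0 ρ ×ˢ Set.Ioo t0 t1))
    (hZbd : ∃ M : ℝ, ∀ y ∈ Set.Ioc 0 ρ, ∀ t ∈ Set.Ioo t0 t1, |Zfun θ γ y t| ≤ M)
    (hbdd : ∀ J : Set ℝ, IsCompact J → J ⊆ Set.Ioo t0 t1 →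
      ∃ M : ℝ, ∀ y ∈ Set.Ioc 0 ρ, ∀ t ∈ J, |dt γ y t| ≤ M ∧ |dt (dt γ) y t| ≤ M)
    (hint : ∀ t ∈ Set.Ioo t0 t1, IntegrableOn (fun y => γ y t) (Set.Ioo 0 ρ))
    (heq : ∀ y ∈ Set.Ioo 0 b, ∀ t ∈ Set.Ioo t0 t1,
      dt (dt γ) y t
        = derivWithin p0 (Set.Icc 0 b) y * Zfun θ γ y t
          + (θ / (θ + 1)) * p0 y * dy (Zfun θ γ) y t) :
    ∃ G' : ℝ → ℝ, ∀ t ∈ Set.Ioo t0 t1,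
      HasDerivAt (fun s => ρ⁻¹ * ∫ y in Set.Ioo 0 ρ, γ y s) (G' t) t ∧
      HasDerivAt G'
        ((1 - θ / (θ + 1)) * ρ⁻¹
            * (∫ y in Set.Ioo 0 ρ, derivWithin p0 (Set.Icc 0 b) y * Zfun θ γ y t)
          + (θ / (θ + 1)) * (p0 ρ / ρ) * Zfun θ γ ρ t) t := by
  classical
  set c : ℝ := θ / (θ + 1) with hc
  set U : Set (ℝ × ℝ) := Set.Ioo 0 b ×ˢ Set.Ioo t0 t1 with hUdef
  have hU : IsOpen U := isOpen_Ioo.prod isOpen_Ioo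
  set F : ℝ × ℝ → ℝ := fun p => γ p.1 p.2 with hFdef
  -- differentiability of F on U
  have hFd : ∀ p ∈ U, DifferentiableAt ℝ F p := fun p hp =>
    (hγ.differentiableOn two_ne_zero).differentiableAt (hU.mem_nhds hp)
  -- partial derivatives as evaluations of fderiv
  have hdyF : ∀ y t, (y, t) ∈ U →
      HasDerivAt (fun y' => γ y' t) (fderiv ℝ F (y, t) ((1:ℝ), (0:ℝ))) y := by
    intro y t hp
    have h1 : HasDerivAt (fun y' : ℝ => ((y', t) : ℝ × ℝ)) ((1:ℝ),(0:ℝ)) y :=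
      (hasDerivAt_id y).prodMk (hasDerivAt_const y t)
    exact (hFd _ hp).hasFDerivAt.comp_hasDerivAt y h1
  have hdtF : ∀ y t, (y, t) ∈ U →
      HasDerivAt (fun s => γ y s) (fderiv ℝ F (y, t) ((0:ℝ), (1:ℝ))) t := by
    intro y t hp
    have h1 : HasDerivAt (fun s : ℝ => ((y, s) : ℝ × ℝ)) ((0:ℝ),(1:ℝ)) t :=
      (hasDerivAt_const t y).prodMk (hasDerivAt_id t)
    exact (hFd _ hp).hasFDerivAt.comp_hasDerivAt t h1
  have hdy_eq : ∀ y t, (y, t) ∈ U → dy γ y t = fderiv ℝ F (y, t) ((1:ℝ), (0:ℝ)) :=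
    fun y t hp => (hdyF y t hp).deriv
  have hdt_eq : ∀ y t, (y, t) ∈ U → dt γ y t = fderiv ℝ F (y, t) ((0:ℝ), (1:ℝ)) :=
    fun y t hp => (hdtF y t hp).deriv
  -- first order functions
  set g1 : ℝ × ℝ → ℝ := fun p => fderiv ℝ F p ((0:ℝ), (1:ℝ)) with hg1def
  set h1 : ℝ × ℝ → ℝ := fun p => fderiv ℝ F p ((1:ℝ), (0:ℝ)) with hh1def
  have hg1C1 : ContDiffOn ℝ 1 g1 U :=
    (hγ.fderiv_of_isOpen hU (by norm_num)).clm_apply contDiffOn_const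
  have hh1C1 : ContDiffOn ℝ 1 h1 U :=
    (hγ.fderiv_of_isOpen hU (by norm_num)).clm_apply contDiffOn_const
  -- second time derivative
  have hslice_nhds : ∀ y t : ℝ, (y, t) ∈ U → {s : ℝ | (y, s) ∈ U} ∈ nhds t := by
    intro y t hp
    have : Continuous (fun s : ℝ => ((y, s) : ℝ × ℝ)) := by fun_prop
    exact this.isOpen_preimage U hU |>.mem_nhds hp
  have hdttH : ∀ y t, (y, t) ∈ U →
      HasDerivAt (fun s => dt γ y s) (fderiv ℝ g1 (y, t) ((0:ℝ),(1:ℝ))) t := by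
    intro y t hp
    have hg1d : DifferentiableAt ℝ g1 (y, t) :=
      (hg1C1.differentiableOn one_ne_zero).differentiableAt (hU.mem_nhds hp)
    have h1 : HasDerivAt (fun s : ℝ => ((y, s) : ℝ × ℝ)) ((0:ℝ),(1:ℝ)) t :=
      (hasDerivAt_const t y).prodMk (hasDerivAt_id t)
    have hg : HasDerivAt (fun s => g1 (y, s)) (fderiv ℝ g1 (y, t) ((0:ℝ),(1:ℝ))) t :=
      hg1d.hasFDerivAt.comp_hasDerivAt t h1
    have hev : (fun s => dt γ y s) =ᶠ[nhds t] (fun s => g1 (y, s)) := by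
      filter_upwards [hslice_nhds y t hp] with s hs
      exact hdt_eq y s hs
    exact hg.congr_of_eventuallyEq hev
  have hdtt_eq : ∀ y t, (y, t) ∈ U →
      dt (dt γ) y t = fderiv ℝ g1 (y, t) ((0:ℝ),(1:ℝ)) :=
    fun y t hp => (hdttH y t hp).deriv
  have hdtt : ∀ y t, (y, t) ∈ U →
      HasDerivAt (fun s => dt γ y s) (dt (dt γ) y t) t :=
    fun y t hp => (hdtt_eq y t hp) ▸ hdttH y t hp
  -- Z as a function on the plane
  set Zu : ℝ × ℝ → ℝ := fun p => (h1 p) ^ (-(θ + 1)) with hZudef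
  have hZu_eq : ∀ y t, (y, t) ∈ U → Zfun θ γ y t = Zu (y, t) := by
    intro y t hp
    simp only [Zfun, Zu, hdy_eq y t hp, h1]
  have hh1pos : ∀ p ∈ U, 0 < h1 p := by
    rintro ⟨y, t⟩ hp
    have := hpos y (by exact hp.1) t hp.2
    rwa [hdy_eq y t hp] at this
  have hZuC1at : ∀ p ∈ U, ContDiffAt ℝ 1 Zu p := by
    intro p hp
    exact ((hh1C1 p hp).contDiffAt (hU.mem_nhds hp)).rpow_const_of_ne (ne_of_gt (hh1pos p hp))
  have hZuC1 : ContDiffOn ℝ 1 Zu U := fun p hp => (hZuC1at p hp).contDiffWithinAt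
  have hZuCont : ContinuousOn Zu U := hZuC1.continuousOn
  -- derivative of Z in y
  have hdyZH : ∀ y t, (y, t) ∈ U →
      HasDerivAt (fun y' => Zfun θ γ y' t) (fderiv ℝ Zu (y, t) ((1:ℝ),(0:ℝ))) y := by
    intro y t hp
    have hZd : DifferentiableAt ℝ Zu (y, t) :=
      (hZuC1at _ hp).differentiableAt one_ne_zero
    have h1' : HasDerivAt (fun y' : ℝ => ((y', t) : ℝ × ℝ)) ((1:ℝ),(0:ℝ)) y :=
      (hasDerivAt_id y).prodMk (hasDerivAt_const y t)
    have hg : HasDerivAt (fun y' => Zu (y', t)) (fderiv ℝ Zu (y, t) ((1:ℝ),(0:ℝ))) y :=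
      hZd.hasFDerivAt.comp_hasDerivAt (l := Zu) y h1'
    have hnh : {y' : ℝ | (y', t) ∈ U} ∈ nhds y := by
      have : Continuous (fun y' : ℝ => ((y', t) : ℝ × ℝ)) := by fun_prop
      exact this.isOpen_preimage U hU |>.mem_nhds hp
    have hev : (fun y' => Zfun θ γ y' t) =ᶠ[nhds y] (fun y' => Zu (y', t)) := by
      filter_upwards [hnh] with y' hy'
      exact hZu_eq y' t hy'
    exact hg.congr_of_eventuallyEq hev
  have hdyZ_eq : ∀ y t, (y, t) ∈ U →
      dy (Zfun θ γ) y t = fderiv ℝ Zu (y, t) ((1:ℝ),(0:ℝ)) :=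
    fun y t hp => (hdyZH y t hp).deriv
  have hdyZ : ∀ y t, (y, t) ∈ U →
      HasDerivAt (fun y' => Zfun θ γ y' t) (dy (Zfun θ γ) y t) y :=
    fun y t hp => (hdyZ_eq y t hp) ▸ hdyZH y t hp
  -- continuity of relevant slice functions
  have hg2Cont : ContinuousOn (fun p => fderiv ℝ g1 p ((0:ℝ),(1:ℝ))) U :=
    (hg1C1.continuousOn_fderiv_of_isOpen hU le_rfl).clm_apply continuousOn_const
  have hz1Cont : ContinuousOn (fun p => fderiv ℝ Zu p ((1:ℝ),(0:ℝ))) U :=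
    (hZuC1.continuousOn_fderiv_of_isOpen hU le_rfl).clm_apply continuousOn_const
  -- p0 facts
  have hIccUD : UniqueDiffOn ℝ (Set.Icc (0:ℝ) b) := uniqueDiffOn_Icc hb
  have hp0'cont : ContinuousOn (fun y => derivWithin p0 (Set.Icc 0 b) y) (Set.Icc 0 b) :=
    hp0.continuousOn_derivWithin hIccUD le_rfl
  have hp0deriv : ∀ y ∈ Set.Ioo (0:ℝ) b,
      HasDerivAt p0 (derivWithin p0 (Set.Icc 0 b) y) y := by
    intro y hy
    have hm : Set.Icc (0:ℝ) b ∈ nhds y := Icc_mem_nhds hy.1 hy.2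
    have hd : DifferentiableAt ℝ p0 y :=
      ((hp0.differentiableOn one_ne_zero) y (Set.mem_Icc_of_Ioo hy)).differentiableAt hm
    rw [derivWithin_of_mem_nhds hm]
    exact hd.hasDerivAt
  obtain ⟨K, hK⟩ : ∃ K, ∀ y ∈ Set.Icc (0:ℝ) b, |derivWithin p0 (Set.Icc 0 b) y| ≤ K := by
    obtain ⟨K, hK⟩ := (isCompact_Icc.image_of_continuousOn hp0'cont).isBounded.subset_closedBall 0
    exact ⟨K, fun y hy => by
      have := hK (Set.mem_image_of_mem _ hy)
      simpa [Metric.mem_closedBall, Real.dist_eq] using this⟩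
  obtain ⟨MZ, hMZ⟩ := hZbd
  -- membership lemma
  have hmemU : ∀ {y t : ℝ}, y ∈ Set.Ioo 0 ρ → t ∈ Set.Ioo t0 t1 → (y, t) ∈ U := by
    intro y t hy ht
    exact ⟨⟨hy.1, hy.2.trans hρb⟩, ht⟩
  have hvol : volume (Set.Ioo (0:ℝ) ρ) ≠ ⊤ := measure_Ioo_lt_top.ne
  -- slices
  have hsliceCont : ∀ {f : ℝ × ℝ → ℝ}, ContinuousOn f U → ∀ t ∈ Set.Ioo t0 t1,
      ContinuousOn (fun y => f (y, t)) (Set.Ioo 0 ρ) := by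
    intro f hf t ht
    exact hf.comp ((by fun_prop : Continuous fun y : ℝ => ((y, t) : ℝ × ℝ)).continuousOn)
      (fun y hy => hmemU hy ht)
  have contDtSlice : ∀ t ∈ Set.Ioo t0 t1,
      ContinuousOn (fun y => dt γ y t) (Set.Ioo 0 ρ) := fun t ht =>
    (hsliceCont hg1C1.continuousOn t ht).congr (fun y hy => hdt_eq y t (hmemU hy ht))
  have contDdtSlice : ∀ t ∈ Set.Ioo t0 t1,
      ContinuousOn (fun y => dt (dt γ) y t) (Set.Ioo 0 ρ) := fun t ht =>
    (hsliceCont hg2Cont t ht).congr (fun y hy => hdtt_eq y t (hmemU hy ht))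
  have contZSlice : ∀ t ∈ Set.Ioo t0 t1,
      ContinuousOn (fun y => Zfun θ γ y t) (Set.Ioo 0 ρ) := fun t ht =>
    (hsliceCont hZuCont t ht).congr (fun y hy => hZu_eq y t (hmemU hy ht))
  have contDyZSlice : ∀ t ∈ Set.Ioo t0 t1,
      ContinuousOn (fun y => dy (Zfun θ γ) y t) (Set.Ioo 0 ρ) := fun t ht =>
    (hsliceCont hz1Cont t ht).congr (fun y hy => hdyZ_eq y t (hmemU hy ht))
  -- integrability helper
  have hIntBdd : ∀ {f : ℝ → ℝ} {M : ℝ}, ContinuousOn f (Set.Ioo 0 ρ) →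
      (∀ y ∈ Set.Ioo 0 ρ, |f y| ≤ M) → IntegrableOn f (Set.Ioo 0 ρ) := by
    intro f M hf hM
    refine ⟨hf.aestronglyMeasurable measurableSet_Ioo, ?_⟩
    apply HasFiniteIntegral.restrict_of_bounded (C := M) hvol.lt_top
    filter_upwards [ae_restrict_mem measurableSet_Ioo] with y hy
    simpa [Real.norm_eq_abs] using hM y hy
  -- integrability of the various integrands at a fixed time
  have bdd_single : ∀ t ∈ Set.Ioo t0 t1, ∃ M : ℝ, ∀ y ∈ Set.Ioc 0 ρ,
      |dt γ y t| ≤ M ∧ |dt (dt γ) y t| ≤ M := by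
    intro t ht
    obtain ⟨M, hM⟩ := hbdd {t} isCompact_singleton (Set.singleton_subset_iff.mpr ht)
    exact ⟨M, fun y hy => hM y hy t rfl⟩
  have int_dtγ : ∀ t ∈ Set.Ioo t0 t1, IntegrableOn (fun y => dt γ y t) (Set.Ioo 0 ρ) := by
    intro t ht
    obtain ⟨M, hM⟩ := bdd_single t ht
    exact hIntBdd (contDtSlice t ht)
      (fun y hy => (hM y (Set.Ioo_subset_Ioc_self hy)).1)
  have int_ddtγ : ∀ t ∈ Set.Ioo t0 t1,
      IntegrableOn (fun y => dt (dt γ) y t) (Set.Ioo 0 ρ) := by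
    intro t ht
    obtain ⟨M, hM⟩ := bdd_single t ht
    exact hIntBdd (contDdtSlice t ht)
      (fun y hy => (hM y (Set.Ioo_subset_Ioc_self hy)).2)
  have int_p0Z : ∀ t ∈ Set.Ioo t0 t1,
      IntegrableOn (fun y => derivWithin p0 (Set.Icc 0 b) y * Zfun θ γ y t)
        (Set.Ioo 0 ρ) := by
    intro t ht
    have hcont : ContinuousOn
        (fun y => derivWithin p0 (Set.Icc 0 b) y * Zfun θ γ y t) (Set.Ioo 0 ρ) := by
      refine ContinuousOn.mul (hp0'cont.mono ?_) (contZSlice t ht)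
      intro y hy
      exact ⟨hy.1.le, (hy.2.trans hρb).le⟩
    refine hIntBdd (M := K * MZ) hcont ?_
    intro y hy
    rw [abs_mul]
    have h1' : |derivWithin p0 (Set.Icc 0 b) y| ≤ K :=
      hK y ⟨hy.1.le, (hy.2.trans hρb).le⟩
    have h2' : |Zfun θ γ y t| ≤ MZ := hMZ y (Set.Ioo_subset_Ioc_self hy) t ht
    exact mul_le_mul h1' h2' (abs_nonneg _) ((abs_nonneg _).trans h1')
  have hcne : c ≠ 0 := by
    rw [hc]; positivity
  have int_pdyZ : ∀ t ∈ Set.Ioo t0 t1,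
      IntegrableOn (fun y => p0 y * dy (Zfun θ γ) y t) (Set.Ioo 0 ρ) := by
    intro t ht
    have h1' : IntegrableOn
        (fun y => c⁻¹ * (dt (dt γ) y t - derivWithin p0 (Set.Icc 0 b) y * Zfun θ γ y t))
        (Set.Ioo 0 ρ) := ((int_ddtγ t ht).sub (int_p0Z t ht)).const_mul _
    refine h1'.congr_fun ?_ measurableSet_Ioo
    intro y hy
    have h2 := heq y ⟨hy.1, hy.2.trans hρb⟩ t ht
    simp only [h2]
    field_simp
    ring
  -- key: differentiation under the integral sign
  have keyDeriv : ∀ (f f' : ℝ → ℝ → ℝ),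
      (∀ y s, (y, s) ∈ U → HasDerivAt (fun s' => f y s') (f' y s) s) →
      (∀ s ∈ Set.Ioo t0 t1, ContinuousOn (fun y => f y s) (Set.Ioo 0 ρ)) →
      (∀ s ∈ Set.Ioo t0 t1, ContinuousOn (fun y => f' y s) (Set.Ioo 0 ρ)) →
      (∀ J : Set ℝ, IsCompact J → J ⊆ Set.Ioo t0 t1 →
        ∃ M : ℝ, ∀ y ∈ Set.Ioc 0 ρ, ∀ s ∈ J, |f' y s| ≤ M) →
      (∀ s ∈ Set.Ioo t0 t1, IntegrableOn (fun y => f y s) (Set.Ioo 0 ρ)) →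
      ∀ t ∈ Set.Ioo t0 t1,
        HasDerivAt (fun s => ∫ y in Set.Ioo 0 ρ, f y s)
          (∫ y in Set.Ioo 0 ρ, f' y t) t := by
    intro f f' hder hcf hcf' hbddf hintf t ht
    set ε : ℝ := min (t - t0) (t1 - t) / 2 with hεdef
    have hε : 0 < ε := by
      have h1' : 0 < t - t0 := by linarith [ht.1]
      have h2' : 0 < t1 - t := by linarith [ht.2]
      have := lt_min h1' h2'
      positivity
    have hJsub : Set.Icc (t - ε) (t + ε) ⊆ Set.Ioo t0 t1 := by
      intro s hs
      have h1' : ε ≤ (t - t0) / 2 := by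
        rw [hεdef]
        have := min_le_left (t - t0) (t1 - t); linarith
      have h2' : ε ≤ (t1 - t) / 2 := by
        rw [hεdef]
        have := min_le_right (t - t0) (t1 - t); linarith
      constructor
      · linarith [hs.1, ht.1]
      · linarith [hs.2, ht.2]
    have hball : Metric.ball t ε ⊆ Set.Icc (t - ε) (t + ε) := by
      intro s hs
      rw [Metric.mem_ball, Real.dist_eq, abs_lt] at hs
      constructor <;> linarith [hs.1, hs.2]
    have hballI : Metric.ball t ε ⊆ Set.Ioo t0 t1 := hball.trans hJsub
    obtain ⟨M, hM⟩ := hbddf (Set.Icc (t - ε) (t + ε)) isCompact_Icc hJsub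
    have key := hasDerivAt_integral_of_dominated_loc_of_deriv_le
      (μ := volume.restrict (Set.Ioo 0 ρ))
      (F := fun s y => f y s) (F' := fun s y => f' y s)
      (bound := fun _ => M) (x₀ := t) (Metric.ball_mem_nhds t hε) ?_ (hintf t ht) ?_ ?_ ?_ ?_
    · exact key.2
    · filter_upwards [isOpen_Ioo.mem_nhds ht] with s hs
      exact (hcf s hs).aestronglyMeasurable measurableSet_Ioo
    · exact (hcf' t ht).aestronglyMeasurable measurableSet_Ioo
    · filter_upwards [ae_restrict_mem measurableSet_Ioo] with y hy
      intro s hs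
      rw [Real.norm_eq_abs]
      exact hM y (Set.Ioo_subset_Ioc_self hy) s (hball hs)
    · exact integrableOn_const hvol
    · filter_upwards [ae_restrict_mem measurableSet_Ioo] with y hy
      intro s hs
      exact hder y s (hmemU hy (hballI hs))
  have hbdd1 : ∀ J : Set ℝ, IsCompact J → J ⊆ Set.Ioo t0 t1 →
      ∃ M : ℝ, ∀ y ∈ Set.Ioc 0 ρ, ∀ s ∈ J, |dt γ y s| ≤ M := by
    intro J hJ hJs
    obtain ⟨M, hM⟩ := hbdd J hJ hJs
    exact ⟨M, fun y hy s hs => (hM y hy s hs).1⟩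
  have hbdd2 : ∀ J : Set ℝ, IsCompact J → J ⊆ Set.Ioo t0 t1 →
      ∃ M : ℝ, ∀ y ∈ Set.Ioc 0 ρ, ∀ s ∈ J, |dt (dt γ) y s| ≤ M := by
    intro J hJ hJs
    obtain ⟨M, hM⟩ := hbdd J hJ hJs
    exact ⟨M, fun y hy s hs => (hM y hy s hs).2⟩
  have contγSlice : ∀ s ∈ Set.Ioo t0 t1, ContinuousOn (fun y => γ y s) (Set.Ioo 0 ρ) := by
    intro s hs
    exact hsliceCont hγ.continuousOn s hs
  have stepA : ∀ t ∈ Set.Ioo t0 t1,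
      HasDerivAt (fun s => ∫ y in Set.Ioo 0 ρ, γ y s)
        (∫ y in Set.Ioo 0 ρ, dt γ y t) t :=
    keyDeriv γ (dt γ) (fun y s hp => by
        have H := hdtF y s hp
        have : dt γ y s = fderiv ℝ F (y, s) ((0:ℝ),(1:ℝ)) := hdt_eq y s hp
        rw [this]; exact H)
      contγSlice contDtSlice hbdd1 hint
  have stepB : ∀ t ∈ Set.Ioo t0 t1,
      HasDerivAt (fun s => ∫ y in Set.Ioo 0 ρ, dt γ y s)
        (∫ y in Set.Ioo 0 ρ, dt (dt γ) y t) t :=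
    keyDeriv (dt γ) (dt (dt γ)) hdtt contDtSlice contDdtSlice hbdd2 int_dtγ
  -- integration by parts on (0, ρ]
  have ibp : ∀ t ∈ Set.Ioo t0 t1,
      (∫ y in Set.Ioo 0 ρ,
        (derivWithin p0 (Set.Icc 0 b) y * Zfun θ γ y t + p0 y * dy (Zfun θ γ) y t))
        = p0 ρ * Zfun θ γ ρ t := by
    intro t ht
    set Φ : ℝ → ℝ := fun y => p0 y * Zfun θ γ y t with hΦdef
    set f : ℝ → ℝ := fun y =>
      derivWithin p0 (Set.Icc 0 b) y * Zfun θ γ y t + p0 y * dy (Zfun θ γ) y t with hfdef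
    have hΦd : ∀ y ∈ Set.Ioo (0:ℝ) b, HasDerivAt Φ (f y) y := by
      intro y hy
      exact (hp0deriv y hy).mul (hdyZ y t ⟨hy, ht⟩)
    have hsliceContB : ∀ {g : ℝ × ℝ → ℝ}, ContinuousOn g U →
        ContinuousOn (fun y => g (y, t)) (Set.Ioo 0 b) := by
      intro g hg
      exact hg.comp ((by fun_prop : Continuous fun y : ℝ => ((y, t) : ℝ × ℝ)).continuousOn)
        (fun y hy => ⟨hy, ht⟩)
    have hZcontB : ContinuousOn (fun y => Zfun θ γ y t) (Set.Ioo 0 b) :=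
      (hsliceContB hZuCont).congr (fun y hy => hZu_eq y t ⟨hy, ht⟩)
    have hdyZcontB : ContinuousOn (fun y => dy (Zfun θ γ) y t) (Set.Ioo 0 b) :=
      (hsliceContB hz1Cont).congr (fun y hy => hdyZ_eq y t ⟨hy, ht⟩)
    have hfcont : ContinuousOn f (Set.Ioo 0 b) :=
      ((hp0'cont.mono Set.Ioo_subset_Icc_self).mul hZcontB).add
        ((hp0.continuousOn.mono Set.Ioo_subset_Icc_self).mul hdyZcontB)
    have int_f : IntegrableOn f (Set.Ioo 0 ρ) := (int_p0Z t ht).add (int_pdyZ t ht)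
    have hFTC : ∀ ε ∈ Set.Ioo (0:ℝ) ρ, ∫ y in ε..ρ, f y = Φ ρ - Φ ε := by
      intro ε hε
      have hsub : Set.Icc ε ρ ⊆ Set.Ioo 0 b :=
        fun y hy => ⟨lt_of_lt_of_le hε.1 hy.1, lt_of_le_of_lt hy.2 hρb⟩
      refine intervalIntegral.integral_eq_sub_of_hasDerivAt (fun y hy => ?_) ?_
      · refine hΦd y (hsub ?_)
        rwa [Set.uIcc_of_le hε.2.le] at hy
      · exact ((hfcont.mono hsub).intervalIntegrable_of_Icc hε.2.le)
    have hcov : AECover (volume.restrict (Set.Ioo 0 ρ)) (nhdsWithin 0 (Set.Ioi 0))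
        (fun ε => Set.Ioo ε ρ) :=
      aecover_Ioo_of_Ioo (Filter.tendsto_id.mono_left nhdsWithin_le_nhds) tendsto_const_nhds
    have hev : ∀ᶠ ε in nhdsWithin 0 (Set.Ioi 0), ε ∈ Set.Ioo (0:ℝ) ρ := by
      filter_upwards [Ioo_mem_nhdsGT_of_mem (⟨le_rfl, hρ⟩ : (0:ℝ) ∈ Set.Ico 0 ρ)] with ε hε
      exact hε
    have heqInt : ∀ᶠ ε in nhdsWithin 0 (Set.Ioi 0),
        (∫ y in Set.Ioo ε ρ, f y ∂(volume.restrict (Set.Ioo 0 ρ))) = Φ ρ - Φ ε := by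
      filter_upwards [hev] with ε hε
      rw [Measure.restrict_restrict measurableSet_Ioo,
        Set.inter_eq_self_of_subset_left (Set.Ioo_subset_Ioo_left hε.1.le)]
      calc (∫ y in Set.Ioo ε ρ, f y) = ∫ y in Set.Ioc ε ρ, f y :=
            (integral_Ioc_eq_integral_Ioo).symm
        _ = ∫ y in ε..ρ, f y := (intervalIntegral.integral_of_le hε.2.le).symm
        _ = Φ ρ - Φ ε := hFTC ε hε
    have hp0c : Filter.Tendsto p0 (nhdsWithin 0 (Set.Ioi 0)) (nhds 0) := by
      have h := hp0.continuousOn 0 ⟨le_rfl, hb.le⟩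
      have hle : nhdsWithin (0:ℝ) (Set.Ioi 0) ≤ nhdsWithin 0 (Set.Icc 0 b) :=
        nhdsWithin_le_iff.mpr (Icc_mem_nhdsGT hb)
      have := h.tendsto.mono_left hle
      rwa [hp00] at this
    have hΦtendsto : Filter.Tendsto Φ (nhdsWithin 0 (Set.Ioi 0)) (nhds 0) := by
      have hgt : Filter.Tendsto (fun ε => |p0 ε| * MZ) (nhdsWithin 0 (Set.Ioi 0)) (nhds 0) := by
        have h' := (hp0c.abs).mul_const MZ
        simpa using h'
      refine squeeze_zero_norm' ?_ hgt
      filter_upwards [hev] with ε hε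
      rw [Real.norm_eq_abs, hΦdef]
      simp only [abs_mul]
      exact mul_le_mul_of_nonneg_left (hMZ ε (Set.Ioo_subset_Ioc_self hε) t ht)
        (abs_nonneg _)
    have htendsto : Filter.Tendsto
        (fun ε => ∫ y in Set.Ioo ε ρ, f y ∂(volume.restrict (Set.Ioo 0 ρ)))
        (nhdsWithin 0 (Set.Ioi 0)) (nhds (Φ ρ)) := by
      have h := Filter.Tendsto.sub (tendsto_const_nhds (x := Φ ρ)) hΦtendsto
      rw [sub_zero] at h
      refine Filter.Tendsto.congr' ?_ h
      filter_upwards [heqInt] with ε h'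
      exact h'.symm
    exact hcov.integral_eq_of_tendsto _ int_f htendsto
  -- the main integral identity
  have intEq : ∀ t ∈ Set.Ioo t0 t1,
      (∫ y in Set.Ioo 0 ρ, dt (dt γ) y t)
        = (1 - c) * (∫ y in Set.Ioo 0 ρ, derivWithin p0 (Set.Icc 0 b) y * Zfun θ γ y t)
          + c * (p0 ρ * Zfun θ γ ρ t) := by
    intro t ht
    have h1' : (∫ y in Set.Ioo 0 ρ, dt (dt γ) y t)
        = ∫ y in Set.Ioo 0 ρ,
            (derivWithin p0 (Set.Icc 0 b) y * Zfun θ γ y t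
              + c * (p0 y * dy (Zfun θ γ) y t)) := by
      refine setIntegral_congr_fun measurableSet_Ioo ?_
      intro y hy
      have h2 := heq y ⟨hy.1, hy.2.trans hρb⟩ t ht
      simp only [h2]
      ring
    have h2' : (∫ y in Set.Ioo 0 ρ,
          (derivWithin p0 (Set.Icc 0 b) y * Zfun θ γ y t
            + c * (p0 y * dy (Zfun θ γ) y t)))
        = (∫ y in Set.Ioo 0 ρ, derivWithin p0 (Set.Icc 0 b) y * Zfun θ γ y t)
          + c * ∫ y in Set.Ioo 0 ρ, p0 y * dy (Zfun θ γ) y t := by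
      rw [integral_add (int_p0Z t ht) ((int_pdyZ t ht).const_mul c)]
      rw [integral_const_mul]
    have h3' : (∫ y in Set.Ioo 0 ρ, derivWithin p0 (Set.Icc 0 b) y * Zfun θ γ y t)
          + (∫ y in Set.Ioo 0 ρ, p0 y * dy (Zfun θ γ) y t)
        = p0 ρ * Zfun θ γ ρ t := by
      rw [← integral_add (int_p0Z t ht) (int_pdyZ t ht)]
      exact ibp t ht
    rw [h1', h2']
    have h4' : (∫ y in Set.Ioo 0 ρ, p0 y * dy (Zfun θ γ) y t)
        = p0 ρ * Zfun θ γ ρ t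
          - ∫ y in Set.Ioo 0 ρ, derivWithin p0 (Set.Icc 0 b) y * Zfun θ γ y t := by
      linarith [h3']
    rw [h4']
    ring
  -- assemble
  refine ⟨fun s => ρ⁻¹ * ∫ y in Set.Ioo 0 ρ, dt γ y s, fun t ht => ⟨?_, ?_⟩⟩
  · exact (stepA t ht).const_mul ρ⁻¹
  · have H := (stepB t ht).const_mul ρ⁻¹
    refine H.congr_deriv ?_
    rw [intEq t ht]
    have hρ0 : ρ ≠ 0 := ne_of_gt hρ
    field_simp
end
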